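/- arXiv:2501.11156 — 8 statements merged into one kernel-verified Lean document; each statement's English description precedes it below -/
import Mathlib

section
/- Let α₁ > α₂ > ⋯ > α_n be real numbers, let β₁ ≤ β₂ ≤ ⋯ ≤ β_n be positive integers, and let S ⊆ ℝ² be a finite set of β₁ + β₂ + ⋯ + β_n points such that for each i the horizontal line y = αᵢ contains exactly βᵢ points of S (so S is contained in the union of these lines). Let k be a positive integer and let 𝒞 be a finite multiset of lines in ℝ² such that every point of S lies on at least k lines of 𝒞 (counted with multiplicity). Suppose 𝒞 contains exactly l₀ non-horizontal lines, and let t be a positive integer with t ≤ n such that β_t ≥ l₀/k. Then |𝒞| ≥ (n − t + 1)·k + l₀·(1 − ∑_{i=t}^{n} 1/βᵢ). -/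
open scoped Classical

/-- `IsOnLine l p` means that the point `p : ℝ × ℝ` lies on the line with coefficient
triple `l = (u, v, c)`, i.e. on `{(x, y) | u * x + v * y = c}`. -/
def IsOnLine (l : ℝ × ℝ × ℝ) (p : ℝ × ℝ) : Prop :=
  l.1 * p.1 + l.2.1 * p.2 = l.2.2

lemma sum_countP_le_card {ι A : Type*} (F : Finset ι) (p : ι → A → Prop)
    (C : Multiset A)
    (hdis : ∀ a ∈ C, ∀ i ∈ F, ∀ j ∈ F, p i a → p j a → i = j) :
    ∑ i ∈ F, C.countP (p i) ≤ Multiset.card C := by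
  classical
  induction C using Multiset.induction with
  | empty => simp
  | cons a s ih =>
    have h1 : ∑ i ∈ F, s.countP (p i) ≤ Multiset.card s :=
      ih (fun b hb => hdis b (Multiset.mem_cons_of_mem hb))
    have h2 : ∑ i ∈ F, (if p i a then 1 else 0) ≤ 1 := by
      by_cases h : ∃ i ∈ F, p i a
      · obtain ⟨i₀, hi₀, hpi₀⟩ := h
        have heq : ∑ i ∈ F, (if p i a then 1 else 0) = 1 := by
          rw [Finset.sum_eq_single i₀]
          · simp [hpi₀]
          · intro j hj hne
            have : ¬ p j a := fun hpj =>
              hne (hdis a (Multiset.mem_cons_self a s) j hj i₀ hi₀ hpj hpi₀)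
            simp [this]
          · intro h'; exact absurd hi₀ h'
        omega
      · push_neg at h
        have : ∑ i ∈ F, (if p i a then 1 else 0) = 0 :=
          Finset.sum_eq_zero (fun i hi => by simp [h i hi])
        omega
    simp only [Multiset.countP_cons, Finset.sum_add_distrib, Multiset.card_cons]
    omega


theorem stmt_0 (n : ℕ) (hn : 1 ≤ n) (α : ℕ → ℝ) (β : ℕ → ℕ)
    -- α₁ > α₂ > ⋯ > α_n
    (hα : ∀ i ∈ Finset.Icc 1 n, ∀ j ∈ Finset.Icc 1 n, i < j → α j < α i)
    -- β₁ ≤ β₂ ≤ ⋯ ≤ β_n are positive integers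
    (hβpos : ∀ i ∈ Finset.Icc 1 n, 0 < β i)
    (hβmono : ∀ i ∈ Finset.Icc 1 n, ∀ j ∈ Finset.Icc 1 n, i ≤ j → β i ≤ β j)
    (S : Finset (ℝ × ℝ))
    -- S has β₁ + ⋯ + β_n points
    (hScard : S.card = ∑ i ∈ Finset.Icc 1 n, β i)
    -- the line y = αᵢ contains exactly βᵢ points of S
    (hSline : ∀ i ∈ Finset.Icc 1 n, (S.filter (fun p => p.2 = α i)).card = β i)
    -- S is contained in the union of these lines
    (hSsub : ∀ p ∈ S, ∃ i ∈ Finset.Icc 1 n, p.2 = α i)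
    (k : ℕ) (hk : 0 < k)
    -- 𝒞 is a finite multiset of lines, given by coefficient triples (u, v, c), (u,v) ≠ (0,0)
    (C : Multiset (ℝ × ℝ × ℝ))
    (hC : ∀ l ∈ C, (l.1, l.2.1) ≠ ((0 : ℝ), (0 : ℝ)))
    -- every point of S lies on at least k lines of 𝒞, counted with multiplicity
    (hcover : ∀ p ∈ S, k ≤ C.countP (fun l => IsOnLine l p))
    -- 𝒞 contains exactly l₀ non-horizontal lines
    (l₀ : ℕ) (hl₀ : l₀ = C.countP (fun l => l.1 ≠ 0))
    -- t is a positive integer with t ≤ n and β_t ≥ l₀ / k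
    (t : ℕ) (ht : t ∈ Finset.Icc 1 n)
    (hβt : (l₀ : ℝ) / (k : ℝ) ≤ (β t : ℝ)) :
    ((n : ℝ) - (t : ℝ) + 1) * (k : ℝ)
      + (l₀ : ℝ) * (1 - ∑ i ∈ Finset.Icc t n, 1 / (β i : ℝ)) ≤ (Multiset.card C : ℝ) := by
  simp only [Finset.mem_Icc] at ht
  obtain ⟨ht1, htn⟩ := ht
  -- injectivity of α on Icc 1 n
  have hαinj : ∀ i ∈ Finset.Icc 1 n, ∀ j ∈ Finset.Icc 1 n, α i = α j → i = j := by
    intro i hi j hj hij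
    rcases lt_trichotomy i j with h | h | h
    · exact absurd hij (hα i hi j hj h).ne'
    · exact h
    · exact absurd hij (hα j hj i hi h).ne
  -- m i : number of horizontal lines of C passing through y = α i
  set m : ℕ → ℕ := fun i => C.countP (fun l => l.1 = 0 ∧ l.2.1 * α i = l.2.2) with hm
  set h₀ : ℕ := C.countP (fun l => l.1 = 0) with hh₀
  -- Step A : sum of m i ≤ h₀
  have stepA : ∑ i ∈ Finset.Icc 1 n, m i ≤ h₀ := by
    have hA := sum_countP_le_card (Finset.Icc 1 n)
      (fun i l => l.2.1 * α i = l.2.2) (C.filter (fun l => l.1 = 0)) ?_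
    · calc ∑ i ∈ Finset.Icc 1 n, m i
          = ∑ i ∈ Finset.Icc 1 n,
            (C.filter (fun l => l.1 = 0)).countP (fun l => l.2.1 * α i = l.2.2) := by
            refine Finset.sum_congr rfl (fun i _ => ?_)
            rw [Multiset.countP_filter]
            exact Multiset.countP_congr rfl (fun l _ => by rw [eq_iff_iff]; tauto)
        _ ≤ Multiset.card (C.filter (fun l => l.1 = 0)) := hA
        _ = h₀ := (Multiset.countP_eq_card_filter _ _).symm
    · intro l hl i hi j hj hpi hpj
      rw [Multiset.mem_filter] at hl
      have hv : l.2.1 ≠ 0 := by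
        intro hv0
        exact hC l hl.1 (by rw [Prod.ext_iff]; exact ⟨hl.2, hv0⟩)
      have : α i = α j := by
        have := hpi.trans hpj.symm
        exact mul_left_cancel₀ hv this
      exact hαinj i hi j hj this
  -- Step B : for all i, k * β i ≤ m i * β i + l₀
  have stepB : ∀ i ∈ Finset.Icc 1 n, k * β i ≤ m i * β i + l₀ := by
    intro i hi
    set Si := S.filter (fun p => p.2 = α i) with hSi
    have hcardSi : Si.card = β i := hSline i hi
    have hsplit : ∀ p ∈ Si, C.countP (fun l => IsOnLine l p)
        = m i + (C.filter (fun l => l.1 ≠ 0)).countP (fun l => IsOnLine l p) := by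
      intro p hp
      rw [Finset.mem_filter] at hp
      have : C = C.filter (fun l => l.1 = 0) + C.filter (fun l => ¬ l.1 = 0) := by
        rw [Multiset.filter_add_not]
      conv_lhs => rw [this]
      rw [Multiset.countP_add]
      congr 1
      · rw [Multiset.countP_filter, hm]
        refine Multiset.countP_congr rfl (fun l _ => ?_)
        simp only [IsOnLine]
        rw [eq_iff_iff]
        constructor
        · rintro ⟨honl, h0⟩
          refine ⟨h0, ?_⟩
          rw [h0, zero_mul, zero_add, hp.2] at honl
          exact honl
        · rintro ⟨h0, hva⟩
          exact ⟨by rw [h0, zero_mul, zero_add, hp.2]; exact hva, h0⟩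
    have hsum : ∑ p ∈ Si, C.countP (fun l => IsOnLine l p)
        = m i * β i + ∑ p ∈ Si, (C.filter (fun l => l.1 ≠ 0)).countP (fun l => IsOnLine l p) := by
      rw [Finset.sum_congr rfl hsplit, Finset.sum_add_distrib, Finset.sum_const, hcardSi,
        smul_eq_mul, mul_comm]
    have hB2 : ∑ p ∈ Si, (C.filter (fun l => l.1 ≠ 0)).countP (fun l => IsOnLine l p) ≤ l₀ := by
      have := sum_countP_le_card Si (fun p l => IsOnLine l p)
        (C.filter (fun l => l.1 ≠ 0)) ?_
      · calc _ ≤ _ := this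
          _ = l₀ := by rw [hl₀, Multiset.countP_eq_card_filter]
      · intro l hl p hp q hq hlp hlq
        rw [Multiset.mem_filter] at hl
        rw [Finset.mem_filter] at hp hq
        simp only [IsOnLine] at hlp hlq
        have hx : p.1 = q.1 := by
          apply mul_left_cancel₀ hl.2
          have : l.2.1 * p.2 = l.2.1 * q.2 := by rw [hp.2, hq.2]
          linarith [hlp, hlq]
        exact Prod.ext hx (hp.2.trans hq.2.symm)
    have hcov : k * β i ≤ ∑ p ∈ Si, C.countP (fun l => IsOnLine l p) := by
      calc k * β i = ∑ _p ∈ Si, k := by rw [Finset.sum_const, hcardSi, smul_eq_mul, mul_comm]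
        _ ≤ _ := Finset.sum_le_sum (fun p hp => hcover p (Finset.mem_filter.mp hp).1)
    omega
  -- Step D : final real arithmetic
  have hcardC : Multiset.card C = l₀ + h₀ := by
    conv_lhs => rw [← Multiset.filter_add_not (fun l => l.1 ≠ 0) C]
    rw [Multiset.card_add, hl₀, hh₀, Multiset.countP_eq_card_filter,
      Multiset.countP_eq_card_filter]
    congr 2
    exact Multiset.filter_congr (fun l _ => by simp)
  have hsub : Finset.Icc t n ⊆ Finset.Icc 1 n :=
    Finset.Icc_subset_Icc ht1 le_rfl
  have hsum_le : ∑ i ∈ Finset.Icc t n, m i ≤ h₀ :=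
    le_trans (Finset.sum_le_sum_of_subset hsub) stepA
  have key : ∀ i ∈ Finset.Icc t n, (k : ℝ) - (l₀ : ℝ) / (β i : ℝ) ≤ (m i : ℝ) := by
    intro i hi
    have hi' := hsub hi
    have hb : (0 : ℝ) < (β i : ℝ) := by exact_mod_cast hβpos i hi'
    have hB := stepB i hi'
    have hBr : (k : ℝ) * β i ≤ (m i : ℝ) * β i + l₀ := by exact_mod_cast hB
    have hdiv : (l₀ : ℝ) / (β i : ℝ) * (β i : ℝ) = (l₀ : ℝ) := div_mul_cancel₀ _ hb.ne'
    have hmul : ((k : ℝ) - (l₀ : ℝ) / (β i : ℝ)) * (β i : ℝ) ≤ (m i : ℝ) * (β i : ℝ) := by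
      nlinarith
    exact le_of_mul_le_mul_right hmul hb
  have hsumkey : ∑ i ∈ Finset.Icc t n, ((k : ℝ) - (l₀ : ℝ) / (β i : ℝ)) ≤ (h₀ : ℝ) := by
    calc ∑ i ∈ Finset.Icc t n, ((k : ℝ) - (l₀ : ℝ) / (β i : ℝ))
        ≤ ∑ i ∈ Finset.Icc t n, (m i : ℝ) := Finset.sum_le_sum key
      _ = ((∑ i ∈ Finset.Icc t n, m i : ℕ) : ℝ) := by push_cast; ring
      _ ≤ (h₀ : ℝ) := by exact_mod_cast hsum_le
  have hcard_Icc : ((Finset.Icc t n).card : ℝ) = (n : ℝ) - t + 1 := by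
    rw [Nat.card_Icc]
    have : n + 1 - t = n - t + 1 := by omega
    rw [this]
    push_cast [Nat.cast_sub htn]
    ring
  have hexpand : ∑ i ∈ Finset.Icc t n, ((k : ℝ) - (l₀ : ℝ) / (β i : ℝ))
      = ((n : ℝ) - t + 1) * k - l₀ * ∑ i ∈ Finset.Icc t n, 1 / (β i : ℝ) := by
    rw [Finset.sum_sub_distrib, Finset.sum_const, nsmul_eq_mul, hcard_Icc, Finset.mul_sum]
    congr 1
    refine Finset.sum_congr rfl (fun i _ => ?_)
    ring
  rw [hcardC]
  push_cast
  rw [hexpand] at hsumkey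
  linarith
end

section
/- Let 𝒞 be a conical grid of order n, i.e., a set of n(n+1)/2 points in ℝ² such that for some real numbers a₁ > a₂ > ⋯ > a_n, the horizontal line y = aᵢ contains exactly i points of 𝒞 for each 1 ≤ i ≤ n (and every point of 𝒞 lies on one of these lines). Then for every positive integer k, any finite multiset of lines in ℝ² that covers every point of 𝒞 at least k times has size at least n·k·(1 − e^{1/(2n) − 1} − 1/n). -/
open scoped Classical

lemma log_div_le_exp (x y : ℝ) (hx : 0 < x) (hxy : x ≤ y) :
    x * Real.log (y / x) ≤ y * Real.exp (-1) := by
  have hy : 0 < y := lt_of_lt_of_le hx hxy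
  have h2 := Real.log_le_sub_one_of_pos (show 0 < y / x * Real.exp (-1) by positivity)
  have h3 : Real.log (y / x * Real.exp (-1)) = Real.log (y / x) + (-1) := by
    rw [Real.log_mul (by positivity) (Real.exp_ne_zero _), Real.log_exp]
  have h1 : Real.log (y / x) ≤ y / x * Real.exp (-1) := by linarith
  have := mul_le_mul_of_nonneg_left h1 hx.le
  calc x * Real.log (y / x) ≤ x * (y / x * Real.exp (-1)) := this
    _ = y * Real.exp (-1) := by field_simp

lemma harm_bound (j : ℕ) (hj : 1 ≤ j) (n : ℕ) (hn : j ≤ n) :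
    ∑ i ∈ Finset.Icc (j + 1) n, (1 : ℝ) / i ≤ Real.log n - Real.log j := by
  induction n, hn using Nat.le_induction with
  | base => simp [Finset.Icc_eq_empty (by omega : ¬ j + 1 ≤ j)]
  | succ n hn ih =>
    have hn1 : 1 ≤ n := le_trans hj hn
    rw [Finset.sum_Icc_succ_top (by omega : j + 1 ≤ n + 1)]
    have hnpos : (0 : ℝ) < n := by exact_mod_cast hn1
    have h1 : Real.log ((n : ℝ) / (n + 1)) ≤ (n : ℝ) / (n + 1) - 1 :=
      Real.log_le_sub_one_of_pos (by positivity)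
    have h2 : Real.log ((n : ℝ) / (n + 1)) = Real.log n - Real.log (n + 1) :=
      Real.log_div (by positivity) (by positivity)
    have h3 : (1 : ℝ) / (n + 1) ≤ Real.log (n + 1) - Real.log n := by
      have : (n : ℝ) / (n + 1) - 1 = -(1 / (n + 1)) := by field_simp; ring
      rw [h2, this] at h1; linarith
    push_cast
    linarith
set_option maxHeartbeats 1000000 in
lemma key_arith (n k s : ℕ) (h : ℕ → ℕ) (hn : 1 ≤ n) (hk : 0 < k)
    (hB : ∀ i ∈ Finset.Icc 1 n, i * k ≤ s + i * h i) :
    (n : ℝ) * k * (1 - Real.exp (1 / (2 * (n : ℝ)) - 1) - 1 / n)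
      ≤ (s : ℝ) + ∑ i ∈ Finset.Icc 1 n, (h i : ℝ) := by
  have hn' : (0 : ℝ) < n := by exact_mod_cast hn
  have hk' : (0 : ℝ) < k := by exact_mod_cast hk
  have hexp : Real.exp (-1) ≤ Real.exp (1 / (2 * (n : ℝ)) - 1) := by
    apply Real.exp_le_exp.mpr
    have : (0:ℝ) ≤ 1 / (2 * (n:ℝ)) := by positivity
    linarith
  have hexppos : (0:ℝ) < Real.exp (1 / (2 * (n : ℝ)) - 1) := Real.exp_pos _
  have htarget : (n : ℝ) * k * (1 - Real.exp (1 / (2 * (n : ℝ)) - 1) - 1 / n)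
      = n * k - n * k * Real.exp (1 / (2 * (n : ℝ)) - 1) - k := by
    field_simp
  have hSnn : (0:ℝ) ≤ ∑ i ∈ Finset.Icc 1 n, (h i : ℝ) :=
    Finset.sum_nonneg fun i _ => by positivity
  by_cases hs : (n : ℝ) * k ≤ s
  · have hf : (1 : ℝ) - Real.exp (1 / (2 * (n : ℝ)) - 1) - 1 / n ≤ 1 := by
      have : (0:ℝ) < 1 / (n:ℝ) := by positivity
      linarith
    have h1 : (n : ℝ) * k * (1 - Real.exp (1 / (2 * (n : ℝ)) - 1) - 1 / n)
        ≤ (n:ℝ) * k * 1 := mul_le_mul_of_nonneg_left hf (by positivity)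
    linarith
  push_neg at hs
  -- choose j
  obtain ⟨j, hjdef⟩ : ∃ j : ℕ, j = max 1 ⌈(s : ℝ) / k⌉₊ := ⟨_, rfl⟩
  have hj1 : 1 ≤ j := hjdef ▸ le_max_left _ _
  have hceil_le : ⌈(s : ℝ) / k⌉₊ ≤ n := by
    apply Nat.ceil_le.mpr
    rw [div_le_iff₀ hk']
    nlinarith
  have hjn : j ≤ n := hjdef ▸ max_le hn hceil_le
  have hj' : (0:ℝ) < j := by exact_mod_cast hj1
  have hjn' : (j:ℝ) ≤ n := by exact_mod_cast hjn
  have hsjk : (s : ℝ) ≤ j * k := by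
    have h1 : (s : ℝ) / k ≤ ⌈(s : ℝ) / k⌉₊ := Nat.le_ceil _
    have h2 : (⌈(s : ℝ) / k⌉₊ : ℝ) ≤ j := by
      rw [hjdef]; exact_mod_cast le_max_right 1 ⌈(s : ℝ) / k⌉₊
    rw [div_le_iff₀ hk'] at h1; nlinarith
  have hs_lb : ((j : ℝ) - 1) * k ≤ s := by
    rcases Nat.eq_zero_or_pos ⌈(s : ℝ) / k⌉₊ with hc | hc
    · have : j = 1 := by omega
      rw [this]; simp
    · have hje : j = ⌈(s : ℝ) / k⌉₊ := by omega
      have h1 : (⌈(s : ℝ) / k⌉₊ : ℝ) < (s:ℝ)/k + 1 := Nat.ceil_lt_add_one (by positivity)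
      rw [← hje] at h1
      rw [div_add' _ _ _ (ne_of_gt hk'), lt_div_iff₀ hk'] at h1
      nlinarith
  clear hjdef hceil_le
  -- sum over the tail
  have hsub : ∑ i ∈ Finset.Icc (j+1) n, (h i : ℝ) ≤ ∑ i ∈ Finset.Icc 1 n, (h i : ℝ) :=
    Finset.sum_le_sum_of_subset_of_nonneg
      (Finset.Icc_subset_Icc (by omega) le_rfl) (fun i _ _ => by positivity)
  have hterm : ∀ i ∈ Finset.Icc (j+1) n, (k : ℝ) - s / i ≤ h i := by
    intro i hi
    rw [Finset.mem_Icc] at hi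
    have hi1 : 1 ≤ i := by omega
    have hi' : (0:ℝ) < i := by exact_mod_cast hi1
    have hb : ((i:ℝ)) * k ≤ s + i * h i := by exact_mod_cast hB i (Finset.mem_Icc.mpr ⟨hi1, hi.2⟩)
    have hsi : (s : ℝ) / i * i = s := div_mul_cancel₀ _ (ne_of_gt hi')
    nlinarith
  have hsum1 : ∑ i ∈ Finset.Icc (j+1) n, ((k : ℝ) - s / i)
      ≤ ∑ i ∈ Finset.Icc (j+1) n, (h i : ℝ) := Finset.sum_le_sum hterm
  have hcard : (Finset.Icc (j+1) n).card = n - j := by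
    rw [Nat.card_Icc]; omega
  have hsum2 : ∑ i ∈ Finset.Icc (j+1) n, ((k : ℝ) - s / i)
      = ((n : ℝ) - j) * k - s * ∑ i ∈ Finset.Icc (j+1) n, (1:ℝ)/i := by
    rw [Finset.sum_sub_distrib, Finset.sum_const, hcard, Finset.mul_sum]
    congr 1
    · rw [nsmul_eq_mul, Nat.cast_sub hjn]
    · exact Finset.sum_congr rfl fun i _ => (mul_one_div _ _).symm
  have hH' : ∑ i ∈ Finset.Icc (j+1) n, (1:ℝ)/i ≤ Real.log n - Real.log j :=
    harm_bound j hj1 n hjn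
  obtain ⟨ℓ, hldef⟩ : ∃ l : ℝ, l = Real.log n - Real.log j := ⟨_, rfl⟩
  have hH : ∑ i ∈ Finset.Icc (j+1) n, (1:ℝ)/i ≤ ℓ := hldef ▸ hH'
  have hl0 : 0 ≤ ℓ := by
    rw [hldef]
    have := Real.log_le_log hj' hjn'
    linarith
  have hjl : (j : ℝ) * ℓ ≤ n * Real.exp (-1) := by
    have : ℓ = Real.log ((n:ℝ)/j) := by
      rw [hldef, Real.log_div (by positivity) (by positivity)]
    rw [this]
    exact log_div_le_exp _ _ hj' hjn'
  -- s * (1 - ℓ) ≥ j*k*(1-ℓ) - k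
  have hkey : (j:ℝ) * k * (1 - ℓ) - k ≤ s * (1 - ℓ) := by
    rcases le_or_gt ℓ 1 with hc | hc
    · have h1 := mul_le_mul_of_nonneg_right hs_lb (by linarith : (0:ℝ) ≤ 1 - ℓ)
      nlinarith [h1, mul_nonneg hk'.le hl0]
    · have h1 := mul_le_mul_of_nonpos_right hsjk (by linarith : 1 - ℓ ≤ 0)
      linarith
  -- combine
  have hSlb : ((n : ℝ) - j) * k - s * ℓ + s ≤ (s : ℝ) + ∑ i ∈ Finset.Icc 1 n, (h i : ℝ) := by
    have h1 : s * ∑ i ∈ Finset.Icc (j+1) n, (1:ℝ)/i ≤ s * ℓ := by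
      apply mul_le_mul_of_nonneg_left hH (by positivity)
    linarith
  have hfinal : (n:ℝ) * k - j * ℓ * k - k ≤ ((n : ℝ) - j) * k - s * ℓ + s := by linarith
  have h5 : (j:ℝ) * ℓ * k ≤ n * Real.exp (-1) * k := mul_le_mul_of_nonneg_right hjl hk'.le
  have h6 : (n:ℝ) * Real.exp (-1) * k ≤ n * Real.exp (1 / (2 * (n : ℝ)) - 1) * k :=
    mul_le_mul_of_nonneg_right (mul_le_mul_of_nonneg_left hexp hn'.le) hk'.le
  rw [htarget]
  linarith
lemma countP_as_sum {α : Type*} (p : α → Prop) [DecidablePred p] (L : Multiset α) :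
    L.countP p = (L.map (fun l => if p l then 1 else 0)).sum := by
  induction L using Multiset.induction_on with
  | empty => simp
  | cons x t ih => simp [Multiset.countP_cons, ih, add_comm]

lemma msum_swap {α β : Type*} (L : Multiset α) (R : Finset β) (f : α → β → ℕ) :
    (L.map (fun l => ∑ p ∈ R, f l p)).sum = ∑ p ∈ R, (L.map (fun l => f l p)).sum := by
  induction L using Multiset.induction_on with
  | empty => simp
  | cons x t ih => simp [ih, Finset.sum_add_distrib]

theorem stmt_1 (n : ℕ) (hn : 1 ≤ n) (a : ℕ → ℝ)
    -- a₁ > a₂ > ⋯ > a_n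
    (ha : ∀ i ∈ Finset.Icc 1 n, ∀ j ∈ Finset.Icc 1 n, i < j → a j < a i)
    -- 𝒞 is a conical grid of order n
    (G : Finset (ℝ × ℝ))
    (hGcard : G.card = n * (n + 1) / 2)
    (hGline : ∀ i ∈ Finset.Icc 1 n, (G.filter (fun p => p.2 = a i)).card = i)
    (hGsub : ∀ p ∈ G, ∃ i ∈ Finset.Icc 1 n, p.2 = a i)
    (k : ℕ) (hk : 0 < k)
    -- L is a finite multiset of lines, given by coefficient triples (u, v, c), (u,v) ≠ (0,0)
    (L : Multiset (ℝ × ℝ × ℝ))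
    (hL : ∀ l ∈ L, (l.1, l.2.1) ≠ ((0 : ℝ), (0 : ℝ)))
    -- L covers every point of the conical grid at least k times, with multiplicity
    (hcover : ∀ p ∈ G, k ≤ L.countP (fun l => IsOnLine l p)) :
    (n : ℝ) * (k : ℝ) * (1 - Real.exp (1 / (2 * (n : ℝ)) - 1) - 1 / (n : ℝ))
      ≤ (Multiset.card L : ℝ) := by
  have haInj : ∀ i ∈ Finset.Icc 1 n, ∀ i' ∈ Finset.Icc 1 n, a i = a i' → i = i' := by
    intro i hi i' hi' he
    rcases lt_trichotomy i i' with hlt | heq | hgt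
    · exact absurd he (ne_of_gt (ha i hi i' hi' hlt))
    · exact heq
    · exact absurd he (ne_of_lt (ha i' hi' i hi hgt))
  set s : ℕ := L.countP (fun l => l.1 ≠ 0) with hsdef
  set h : ℕ → ℕ := fun i => L.countP (fun l => l.1 = 0 ∧ l.2.2 = l.2.1 * a i) with hhdef
  -- Claim A : the horizontal-line counts and the non-horizontal count fit inside L
  have claimA : s + ∑ i ∈ Finset.Icc 1 n, h i ≤ Multiset.card L := by
    have hrw : s + ∑ i ∈ Finset.Icc 1 n, h i
        = (L.map (fun l => (if l.1 ≠ 0 then 1 else 0)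
            + ∑ i ∈ Finset.Icc 1 n,
                (if (l.1 = 0 ∧ l.2.2 = l.2.1 * a i) then 1 else 0))).sum := by
      rw [Multiset.sum_map_add,
        msum_swap L (Finset.Icc 1 n)
          (fun l i => if (l.1 = 0 ∧ l.2.2 = l.2.1 * a i) then 1 else 0)]
      congr 1
      · exact countP_as_sum _ L
      · exact Finset.sum_congr rfl fun i _ => countP_as_sum _ L
    have hb : ∀ l ∈ L, (if l.1 ≠ 0 then 1 else 0)
        + ∑ i ∈ Finset.Icc 1 n,
            (if (l.1 = 0 ∧ l.2.2 = l.2.1 * a i) then 1 else 0) ≤ 1 := by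
      intro l hl
      by_cases hu : l.1 = 0
      · have hv : l.2.1 ≠ 0 := by
          intro hv0
          exact hL l hl (Prod.ext hu hv0)
        have hcardle : ((Finset.Icc 1 n).filter
            (fun i => l.1 = 0 ∧ l.2.2 = l.2.1 * a i)).card ≤ 1 := by
          apply Finset.card_le_one.mpr
          intro i hi i' hi'
          rw [Finset.mem_filter] at hi hi'
          apply haInj i hi.1 i' hi'.1
          exact mul_left_cancel₀ hv (hi.2.2 ▸ hi'.2.2)
        rw [if_neg (by simpa using hu), ← Finset.card_filter]
        simpa using hcardle
      · rw [if_pos hu, Finset.sum_eq_zero (fun i _ => by simp [hu])]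
        omega
    calc s + ∑ i ∈ Finset.Icc 1 n, h i
        = _ := hrw
      _ ≤ (L.map (fun _ => 1)).sum := Multiset.sum_map_le_sum_map _ _ hb
      _ = Multiset.card L := by simp
  -- Claim B : row-counting inequality
  have claimB : ∀ i ∈ Finset.Icc 1 n, i * k ≤ s + i * h i := by
    intro i hi
    set R : Finset (ℝ × ℝ) := G.filter (fun p => p.2 = a i) with hRdef
    have hRcard : R.card = i := hGline i hi
    have step1 : i * k ≤ ∑ p ∈ R, L.countP (fun l => IsOnLine l p) := by
      calc i * k = ∑ p ∈ R, k := by rw [Finset.sum_const, hRcard, smul_eq_mul]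
        _ ≤ _ := Finset.sum_le_sum fun p hp => hcover p (Finset.mem_filter.mp hp).1
    have step2 : ∑ p ∈ R, L.countP (fun l => IsOnLine l p)
        = (L.map (fun l => (R.filter (fun p => IsOnLine l p)).card)).sum := by
      simp only [countP_as_sum]
      rw [← msum_swap L R (fun l p => if IsOnLine l p then 1 else 0)]
      simp only [← Finset.card_filter]
    have step3 : ∀ l ∈ L, (R.filter (fun p => IsOnLine l p)).card
        ≤ (if l.1 ≠ 0 then 1 else 0)
          + i * (if (l.1 = 0 ∧ l.2.2 = l.2.1 * a i) then 1 else 0) := by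
      intro l hl
      by_cases hu : l.1 = 0
      · by_cases hc : l.2.2 = l.2.1 * a i
        · rw [if_neg (by simpa using hu), if_pos ⟨hu, hc⟩]
          simpa [hRcard] using Finset.card_filter_le R (fun p => IsOnLine l p)
        · have hemp : R.filter (fun p => IsOnLine l p) = ∅ := by
            apply Finset.filter_eq_empty_iff.mpr
            intro p hp hon
            rw [Finset.mem_filter] at hp
            unfold IsOnLine at hon
            rw [hu, hp.2, zero_mul, zero_add] at hon
            exact hc hon.symm
          rw [hemp, if_neg (by simpa using hu), if_neg (by tauto)]
          simp
      · rw [if_pos hu, if_neg (by tauto)]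
        have : (R.filter (fun p => IsOnLine l p)).card ≤ 1 := by
          apply Finset.card_le_one.mpr
          intro p hp q hq
          rw [Finset.mem_filter] at hp hq
          have hp2 : p.2 = a i := (Finset.mem_filter.mp hp.1).2
          have hq2 : q.2 = a i := (Finset.mem_filter.mp hq.1).2
          have e1 : l.1 * p.1 + l.2.1 * a i = l.2.2 := by
            rw [← hp2]; exact hp.2
          have e2 : l.1 * q.1 + l.2.1 * a i = l.2.2 := by
            rw [← hq2]; exact hq.2
          have : p.1 = q.1 := by
            have h3 : l.1 * p.1 = l.1 * q.1 := by linarith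
            exact mul_left_cancel₀ hu h3
          exact Prod.ext this (hp2.trans hq2.symm)
        omega
    have step4 : (L.map (fun l => (if l.1 ≠ 0 then 1 else 0)
          + i * (if (l.1 = 0 ∧ l.2.2 = l.2.1 * a i) then 1 else 0))).sum
        = s + i * h i := by
      rw [Multiset.sum_map_add, Multiset.sum_map_mul_left, ← countP_as_sum, ← countP_as_sum]
    calc i * k ≤ ∑ p ∈ R, L.countP (fun l => IsOnLine l p) := step1
      _ = _ := step2
      _ ≤ _ := Multiset.sum_map_le_sum_map _ _ step3
      _ = s + i * h i := step4
  -- put everything together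
  have hmain := key_arith n k s h hn hk claimB
  have hcast : ((s : ℝ) + ∑ i ∈ Finset.Icc 1 n, (h i : ℝ)) ≤ (Multiset.card L : ℝ) := by
    exact_mod_cast claimA
  linarith
end

section
/- There exists a constant C > 0 such that the following holds for all integers n ≥ m ≥ 2 and all positive integers k: if ℋ is an m × n half-grid in ℝ², then any finite multiset of lines in ℝ² that covers every point of ℋ at least k times has size at least m·k·(1 − e^{−n/m} − C·n/m²). -/
open scoped Classical

/-- If for each element of `L` at most one predicate `f i` (with `i ∈ I`) holds, and it
implies `Q`, then the sum of counts is at most the count of `Q`. -/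
lemma aux_sum_countP_le {α ι : Type*} (I : Finset ι) (f : ι → α → Prop) (Q : α → Prop)
    [∀ i, DecidablePred (f i)] [DecidablePred Q] :
    ∀ (L : Multiset α),
      (∀ x ∈ L, ∑ i ∈ I, (if f i x then (1:ℕ) else 0) ≤ (if Q x then 1 else 0)) →
      ∑ i ∈ I, L.countP (f i) ≤ L.countP Q := by
  intro L
  induction L using Multiset.induction_on with
  | empty => simp
  | cons a s ih =>
    intro h
    simp only [Multiset.countP_cons]
    rw [Finset.sum_add_distrib]
    have h1 := ih (fun x hx => h x (Multiset.mem_cons_of_mem hx))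
    have h2 := h a (Multiset.mem_cons_self a s)
    omega

lemma aux_countP_le_add {α : Type*} (P Q R : α → Prop)
    [DecidablePred P] [DecidablePred Q] [DecidablePred R] :
    ∀ (L : Multiset α), (∀ x ∈ L, P x → Q x ∨ R x) →
      L.countP P ≤ L.countP Q + L.countP R := by
  intro L
  induction L using Multiset.induction_on with
  | empty => simp
  | cons a s ih =>
    intro h
    simp only [Multiset.countP_cons]
    have h1 := ih (fun x hx => h x (Multiset.mem_cons_of_mem hx))
    have h2 := h a (Multiset.mem_cons_self a s)
    by_cases hP : P a
    · rcases h2 hP with hQ | hR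
      · simp only [hP, hQ, if_true]; omega
      · simp only [hP, hR, if_true]; omega
    · simp only [hP, if_false]; omega

lemma aux_harm : ∀ (M q : ℕ), 1 ≤ q → q ≤ M →
    ∑ t ∈ Finset.Ico (q+1) (M+1), (1:ℝ)/t ≤ Real.log M - Real.log q := by
  intro M
  induction M with
  | zero => intro q h1 h2; omega
  | succ M ih =>
    intro q h1 h2
    rcases Nat.eq_or_lt_of_le h2 with h | h
    · subst h; simp
    · have hqM : q ≤ M := by omega
      have hM1 : (1:ℝ) ≤ M := by exact_mod_cast Nat.one_le_iff_ne_zero.mpr (by omega)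
      have hMpos : (0:ℝ) < M := by linarith
      have key : (1:ℝ)/(M+1) ≤ Real.log (M+1) - Real.log M := by
        have hx : (0:ℝ) < (M:ℝ)/(M+1) := by positivity
        have hlog := Real.log_le_sub_one_of_pos hx
        rw [Real.log_div (by positivity) (by positivity)] at hlog
        have h2' : Real.log M - Real.log (M+1) ≤ -(1/((M:ℝ)+1)) := by
          calc Real.log M - Real.log (M+1) ≤ (M:ℝ)/((M:ℝ)+1) - 1 := hlog
          _ = -(1/((M:ℝ)+1)) := by field_simp; ring
        linarith
      have step := ih q h1 hqM
      rw [Finset.sum_Ico_succ_top (by omega)]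
      push_cast
      push_cast at step key
      linarith

lemma aux_reindex (M q : ℕ) (h : q ≤ M) (f : ℕ → ℝ) :
    ∑ j ∈ Finset.range (M - q), f (M - j) = ∑ t ∈ Finset.Ico (q+1) (M+1), f t := by
  apply Finset.sum_nbij' (i := fun j => M - j) (j := fun t => M - t)
  · intro a ha; simp only [Finset.mem_range] at ha; simp only [Finset.mem_Ico]; omega
  · intro a ha; simp only [Finset.mem_Ico] at ha; simp only [Finset.mem_range]; omega
  · intro a ha; simp only [Finset.mem_range] at ha; omega
  · intro a ha; simp only [Finset.mem_Ico] at ha; omega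
  · intro a ha; rfl

set_option maxHeartbeats 1000000 in
theorem stmt_2 :
    ∃ C : ℝ, 0 < C ∧
      ∀ m n : ℕ, 2 ≤ m → m ≤ n → ∀ k : ℕ, 0 < k →
      ∀ a b : ℕ → ℝ,
        -- a₀ < a₁ < ⋯ < a_{n-1} and b₀ < b₁ < ⋯ < b_{m-1}
        (∀ i j : ℕ, i < j → j < n → a i < a j) →
        (∀ i j : ℕ, i < j → j < m → b i < b j) →
      ∀ L : Multiset (ℝ × ℝ × ℝ),
        (∀ l ∈ L, (l.1, l.2.1) ≠ ((0 : ℝ), (0 : ℝ))) →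
        -- L covers every point (aᵢ, bⱼ) of the m × n half-grid at least k times
        (∀ i j : ℕ, i < n → j < m → (m - 1) * i + (n - 1) * j ≤ (m - 1) * (n - 1) →
          k ≤ L.countP (fun l => IsOnLine l (a i, b j))) →
        (m : ℝ) * (k : ℝ) * (1 - Real.exp (-(n : ℝ) / (m : ℝ)) - C * (n : ℝ) / (m : ℝ) ^ 2)
          ≤ (Multiset.card L : ℝ) := by
  refine ⟨2, by norm_num, ?_⟩
  intro m n hm hmn k hk a b ha hb L hL hcov
  have haInj : ∀ i i', i < n → i' < n → a i = a i' → i = i' := by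
    intro i i' hi hi' hE
    rcases lt_trichotomy i i' with h | h | h
    · exact absurd hE (ne_of_lt (ha i i' h hi'))
    · exact h
    · exact absurd hE.symm (ne_of_lt (ha i' i h hi))
  have hbInj : ∀ j j', j < m → j' < m → b j = b j' → j = j' := by
    intro i i' hi hi' hE
    rcases lt_trichotomy i i' with h | h | h
    · exact absurd hE (ne_of_lt (hb i i' h hi'))
    · exact h
    · exact absurd hE.symm (ne_of_lt (hb i' i h hi))
  set M := m - 1 with hM_def
  set ν := n - 1 with hν_def
  have hM1 : 1 ≤ M := by omega
  have hν1 : 1 ≤ ν := by omega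
  have hMν : M ≤ ν := by omega
  have hMR : (0:ℝ) < M := by exact_mod_cast hM1
  have hνR : (0:ℝ) < ν := by exact_mod_cast hν1
  have hmR : (0:ℝ) < m := by positivity
  have hnR : (0:ℝ) < n := by
    have : (0:ℕ) < n := by omega
    exact_mod_cast this
  set E : ℝ := Real.exp (-(ν:ℝ)/(M:ℝ)) with hE_def
  have hEpos : 0 < E := Real.exp_pos _
  have hE1 : E < 1 := by
    rw [hE_def, Real.exp_lt_one_iff, neg_div]
    have : (0:ℝ) < (ν:ℝ)/(M:ℝ) := by positivity
    linarith
  set q := ⌈(M:ℝ) * E⌉₊ with hq_def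
  have hq1 : 1 ≤ q := by
    rw [hq_def]
    exact Nat.ceil_pos.mpr (by positivity)
  have hqM : q ≤ M := by
    rw [hq_def]
    exact Nat.ceil_le.mpr (by nlinarith)
  have hqE : (M:ℝ) * E ≤ q := Nat.le_ceil _
  have hqE' : (q:ℝ) < (M:ℝ) * E + 1 := by
    rw [hq_def]
    exact Nat.ceil_lt_add_one (by positivity)
  set r := M - q with hr_def
  -- the row sizes
  set s : ℕ → ℕ := fun j => ν * (M - j) / M + 1 with hs_def
  set horiz : ℕ → (ℝ × ℝ × ℝ) → Prop := fun j l => l.1 = 0 ∧ l.2.1 * b j = l.2.2 with hhoriz_def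
  set H : ℕ → ℕ := fun j => L.countP (horiz j) with hH_def
  set N' : ℕ := L.countP (fun l => l.1 ≠ 0) with hN_def
  -- points of each row are in the half-grid
  have hrowpt : ∀ j, j < M → ∀ i, i < s j → i < n ∧ M * i + ν * j ≤ M * ν := by
    intro j hj i hi
    simp only [hs_def] at hi
    have hi' : i ≤ ν * (M - j) / M := Nat.lt_succ_iff.mp hi
    have hi2 : i * M ≤ ν * (M - j) := (Nat.le_div_iff_mul_le (by omega)).mp hi'
    have hsplit : ν * (M - j) + ν * j = ν * M := by
      rw [← Nat.mul_add, Nat.sub_add_cancel (by omega)]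
    have h2 : ν * (M - j) ≤ ν * M := Nat.mul_le_mul_left ν (Nat.sub_le M j)
    have hiν : i ≤ ν := Nat.le_of_mul_le_mul_right (le_trans hi2 h2) (by omega)
    refine ⟨by omega, ?_⟩
    calc M * i + ν * j = i * M + ν * j := by rw [Nat.mul_comm]
    _ ≤ ν * (M - j) + ν * j := Nat.add_le_add_right hi2 _
    _ = ν * M := hsplit
    _ = M * ν := Nat.mul_comm ν M
  -- the per-row counting inequality
  have hkey : ∀ j, j < r → k * s j ≤ H j * s j + N' := by
    intro j hj
    have hjM : j < M := by omega
    have hjm : j < m := by omega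
    have step1 : ∀ i ∈ Finset.range (s j),
        k ≤ L.countP (fun l => IsOnLine l (a i, b j)) := by
      intro i hi
      rw [Finset.mem_range] at hi
      obtain ⟨h1, h2⟩ := hrowpt j hjM i hi
      exact hcov i j h1 hjm h2
    have step2 : ∀ i ∈ Finset.range (s j),
        L.countP (fun l => IsOnLine l (a i, b j)) ≤
          H j + L.countP (fun l => l.1 ≠ 0 ∧ IsOnLine l (a i, b j)) := by
      intro i _
      simp only [hH_def, hhoriz_def]
      apply aux_countP_le_add
      intro x _ hx
      by_cases h0 : x.1 = 0
      · left
        refine ⟨h0, ?_⟩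
        rw [IsOnLine, h0] at hx
        simpa using hx
      · right; exact ⟨h0, hx⟩
    have step3 : ∑ i ∈ Finset.range (s j),
        L.countP (fun l => l.1 ≠ 0 ∧ IsOnLine l (a i, b j)) ≤ N' := by
      rw [hN_def]
      apply aux_sum_countP_le
      intro x hxL
      by_cases h0 : x.1 ≠ 0
      · rw [if_pos h0]
        have hcf : ∑ i ∈ Finset.range (s j),
            (if x.1 ≠ 0 ∧ IsOnLine x (a i, b j) then (1:ℕ) else 0)
            = ((Finset.range (s j)).filter (fun i => x.1 ≠ 0 ∧ IsOnLine x (a i, b j))).card := by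
          rw [Finset.card_filter]
        rw [hcf]
        apply Finset.card_le_one.mpr
        intro i hi i' hi'
        simp only [Finset.mem_filter, Finset.mem_range] at hi hi'
        obtain ⟨hi1, -, hi2⟩ := hi
        obtain ⟨hi1', -, hi2'⟩ := hi'
        rw [IsOnLine] at hi2 hi2'
        have hfst : x.1 * a i = x.1 * a i' := by linarith
        have haa : a i = a i' := mul_left_cancel₀ h0 hfst
        exact haInj i i' ((hrowpt j hjM i hi1).1) ((hrowpt j hjM i' hi1').1) haa
      · push_neg at h0
        have hz : ∑ i ∈ Finset.range (s j),
            (if x.1 ≠ 0 ∧ IsOnLine x (a i, b j) then (1:ℕ) else 0) = 0 :=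
          Finset.sum_eq_zero (fun i _ => if_neg (by simp [h0]))
        rw [hz]
        exact Nat.zero_le _
    calc k * s j = ∑ _i ∈ Finset.range (s j), k := by
          rw [Finset.sum_const, Finset.card_range, smul_eq_mul, Nat.mul_comm]
    _ ≤ ∑ i ∈ Finset.range (s j), L.countP (fun l => IsOnLine l (a i, b j)) :=
          Finset.sum_le_sum step1
    _ ≤ ∑ i ∈ Finset.range (s j),
          (H j + L.countP (fun l => l.1 ≠ 0 ∧ IsOnLine l (a i, b j))) :=
          Finset.sum_le_sum step2
    _ = H j * s j + ∑ i ∈ Finset.range (s j),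
          L.countP (fun l => l.1 ≠ 0 ∧ IsOnLine l (a i, b j)) := by
          rw [Finset.sum_add_distrib, Finset.sum_const, Finset.card_range, smul_eq_mul,
            Nat.mul_comm]
    _ ≤ H j * s j + N' := Nat.add_le_add_left step3 _
  -- the global counting inequality
  have hglobal : N' + ∑ j ∈ Finset.range r, H j ≤ Multiset.card L := by
    have h1 : ∑ j ∈ Finset.range r, H j ≤ L.countP (fun l => l.1 = 0) := by
      simp only [hH_def]
      apply aux_sum_countP_le
      intro x hxL
      by_cases h0 : x.1 = 0
      · rw [if_pos h0]
        have hcf : ∑ j ∈ Finset.range r, (if horiz j x then (1:ℕ) else 0)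
            = ((Finset.range r).filter (fun j => horiz j x)).card := by
          rw [Finset.card_filter]
        rw [hcf]
        apply Finset.card_le_one.mpr
        intro j hj j' hj'
        simp only [Finset.mem_filter, Finset.mem_range, hhoriz_def] at hj hj'
        obtain ⟨hj1, -, hj2⟩ := hj
        obtain ⟨hj1', -, hj2'⟩ := hj'
        have hv : x.2.1 ≠ 0 := by
          intro hv0
          exact hL x hxL (by rw [Prod.ext_iff]; exact ⟨h0, hv0⟩)
        have hbb : b j = b j' := mul_left_cancel₀ hv (by linarith)
        exact hbInj j j' (by omega) (by omega) hbb
      · have hz : ∑ j ∈ Finset.range r, (if horiz j x then (1:ℕ) else 0) = 0 :=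
          Finset.sum_eq_zero (fun j _ => if_neg (by simp [hhoriz_def, h0]))
        simp [hz]
    have h2 : L.countP (fun l => l.1 = 0) + N' = Multiset.card L := by
      rw [hN_def]
      exact (Multiset.card_eq_countP_add_countP _ _).symm
    omega
  -- real versions
  have hspos : ∀ j, (0:ℝ) < (s j : ℝ) := by
    intro j
    have : 0 < s j := by simp only [hs_def]; exact Nat.succ_pos _
    exact_mod_cast this
  have hsR : ∀ j, j < r → (ν:ℝ) * ((M:ℝ) - (j:ℝ)) ≤ (M:ℝ) * (s j : ℝ) := by
    intro j hj
    have hjM : j ≤ M := by omega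
    have hnat : ν * (M - j) < M * s j := by
      have h1 : ν * (M - j) < M * (ν * (M - j) / M + 1) := by
        rw [Nat.mul_add, Nat.mul_one]
        conv_lhs => rw [← Nat.div_add_mod (ν * (M - j)) M]
        exact Nat.add_lt_add_left (Nat.mod_lt _ (by omega)) _
      simpa only [hs_def] using h1
    have hc2 : (ν:ℝ) * ((M:ℝ) - (j:ℝ)) = ((ν * (M - j) : ℕ) : ℝ) := by
      push_cast [Nat.cast_sub hjM]; ring
    rw [hc2]
    calc ((ν * (M - j) : ℕ) : ℝ) ≤ ((M * s j : ℕ) : ℝ) := by exact_mod_cast hnat.le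
    _ = (M:ℝ) * (s j : ℝ) := by push_cast; ring
  -- the harmonic sum bound
  have hsum : ∑ j ∈ Finset.range r, (1:ℝ) / (s j : ℝ) ≤ 1 := by
    have term : ∀ j ∈ Finset.range r,
        (1:ℝ) / (s j : ℝ) ≤ (M:ℝ) / ((ν:ℝ) * (((M - j : ℕ)):ℝ)) := by
      intro j hj
      rw [Finset.mem_range] at hj
      have hjM : j ≤ M := by omega
      have hMj : (0:ℝ) < ((M - j : ℕ) : ℝ) := by
        have : 0 < M - j := by omega
        exact_mod_cast this
      rw [div_le_div_iff₀ (hspos j) (by positivity)]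
      have hcast : ((M - j : ℕ) : ℝ) = (M:ℝ) - (j:ℝ) := by
        push_cast [Nat.cast_sub hjM]; ring
      rw [one_mul, hcast]
      linarith [hsR j hj]
    have sum2 : ∑ j ∈ Finset.range r, (M:ℝ) / ((ν:ℝ) * (((M - j : ℕ)):ℝ))
        = ∑ t ∈ Finset.Ico (q+1) (M+1), (M:ℝ) / ((ν:ℝ) * (t:ℝ)) := by
      rw [hr_def]
      exact aux_reindex M q hqM (fun t => (M:ℝ) / ((ν:ℝ) * (t:ℝ)))
    have sum3 : ∑ t ∈ Finset.Ico (q+1) (M+1), (M:ℝ) / ((ν:ℝ) * (t:ℝ))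
        = ((M:ℝ)/(ν:ℝ)) * ∑ t ∈ Finset.Ico (q+1) (M+1), (1:ℝ)/(t:ℝ) := by
      rw [Finset.mul_sum]
      apply Finset.sum_congr rfl
      intro t _
      rw [div_mul_div_comm, mul_one]
    have sum4 : ∑ t ∈ Finset.Ico (q+1) (M+1), (1:ℝ)/(t:ℝ) ≤ Real.log M - Real.log q :=
      aux_harm M q hq1 hqM
    have hlogq : Real.log M - Real.log q ≤ (ν:ℝ)/(M:ℝ) := by
      have h1 : Real.log ((M:ℝ) * E) ≤ Real.log q :=
        Real.log_le_log (by positivity) hqE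
      rw [Real.log_mul (by positivity) (by positivity), hE_def, Real.log_exp] at h1
      have : -(ν:ℝ)/(M:ℝ) = -((ν:ℝ)/(M:ℝ)) := by ring
      rw [this] at h1
      linarith
    calc ∑ j ∈ Finset.range r, (1:ℝ) / (s j : ℝ)
        ≤ ∑ j ∈ Finset.range r, (M:ℝ) / ((ν:ℝ) * (((M - j : ℕ)):ℝ)) :=
          Finset.sum_le_sum term
    _ = ((M:ℝ)/(ν:ℝ)) * ∑ t ∈ Finset.Ico (q+1) (M+1), (1:ℝ)/(t:ℝ) := by
          rw [sum2, sum3]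
    _ ≤ ((M:ℝ)/(ν:ℝ)) * ((ν:ℝ)/(M:ℝ)) := by
          apply mul_le_mul_of_nonneg_left _ (by positivity)
          linarith
    _ = 1 := by field_simp
  -- per-row real inequality
  have hHj : ∀ j, j < r → (k:ℝ) - (N':ℝ)/(s j : ℝ) ≤ (H j : ℝ) := by
    intro j hj
    have hcast : (k:ℝ) * (s j:ℝ) ≤ (H j:ℝ) * (s j:ℝ) + (N':ℝ) := by
      exact_mod_cast hkey j hj
    have hs := hspos j
    rw [sub_le_iff_le_add, ← sub_le_iff_le_add', le_div_iff₀ hs]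
    nlinarith
  -- conclude r * k ≤ card L
  have hmain : (r:ℝ) * (k:ℝ) ≤ (Multiset.card L : ℝ) := by
    have hNpos : (0:ℝ) ≤ (N':ℝ) := Nat.cast_nonneg _
    have h1 : ∑ j ∈ Finset.range r, ((k:ℝ) - (N':ℝ)/(s j:ℝ)) ≤ ∑ j ∈ Finset.range r, (H j:ℝ) :=
      Finset.sum_le_sum (fun j hj => hHj j (Finset.mem_range.mp hj))
    have h2 : ∑ j ∈ Finset.range r, ((k:ℝ) - (N':ℝ)/(s j:ℝ))
        = (r:ℝ) * (k:ℝ) - (N':ℝ) * ∑ j ∈ Finset.range r, (1:ℝ)/(s j:ℝ) := by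
      rw [Finset.sum_sub_distrib, Finset.sum_const, Finset.card_range, nsmul_eq_mul,
        Finset.mul_sum]
      congr 1
      apply Finset.sum_congr rfl
      intro t _
      rw [mul_one_div]
    have h3 : (N':ℝ) * ∑ j ∈ Finset.range r, (1:ℝ)/(s j:ℝ) ≤ (N':ℝ) :=
      mul_le_of_le_one_right hNpos hsum
    have h4 : ((N' + ∑ j ∈ Finset.range r, H j : ℕ) : ℝ) ≤ (Multiset.card L : ℝ) := by
      exact_mod_cast hglobal
    push_cast at h4
    linarith
  -- final numeric computation
  have hrR : (r:ℝ) = (M:ℝ) - (q:ℝ) := by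
    rw [hr_def, Nat.cast_sub hqM]
  have hMm : (M:ℝ) = (m:ℝ) - 1 := by
    rw [hM_def, Nat.cast_sub (by omega : 1 ≤ m)]; norm_num
  have hνn : (ν:ℝ) = (n:ℝ) - 1 := by
    rw [hν_def, Nat.cast_sub (by omega : 1 ≤ n)]; norm_num
  set En : ℝ := Real.exp (-(n:ℝ)/(m:ℝ)) with hEn_def
  have hEnpos : 0 < En := Real.exp_pos _
  have hmnR : (m:ℝ) ≤ (n:ℝ) := by exact_mod_cast hmn
  have hEEn : E ≤ En := by
    rw [hE_def, hEn_def, Real.exp_le_exp, div_le_div_iff₀ hMR hmR, hMm, hνn]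
    nlinarith
  have hrlow : (m:ℝ) * (1 - En) - 2 * (n:ℝ)/(m:ℝ) ≤ (r:ℝ) := by
    have h1 : (M:ℝ) - (M:ℝ) * En - 1 ≤ (r:ℝ) := by
      rw [hrR]
      have : (M:ℝ) * E ≤ (M:ℝ) * En := mul_le_mul_of_nonneg_left hEEn hMR.le
      linarith
    have hEn1 : En < 1 := by
      rw [hEn_def, Real.exp_lt_one_iff, neg_div]
      have : (0:ℝ) < (n:ℝ)/(m:ℝ) := by positivity
      linarith
    have h2 : (m:ℝ) * (1 - En) - 2 ≤ (M:ℝ) - (M:ℝ) * En - 1 := by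
      rw [hMm]; nlinarith
    have h3 : (2:ℝ) ≤ 2 * (n:ℝ)/(m:ℝ) := by
      rw [mul_div_assoc]
      have : (1:ℝ) ≤ (n:ℝ)/(m:ℝ) := by
        rw [le_div_iff₀ hmR]; linarith
      linarith
    linarith
  have hfinal : (m:ℝ) * (k:ℝ) * (1 - En - 2 * (n:ℝ) / (m:ℝ)^2) ≤ (r:ℝ) * (k:ℝ) := by
    have hkR : (1:ℝ) ≤ (k:ℝ) := by exact_mod_cast hk
    have hid : (m:ℝ) * (k:ℝ) * (1 - En - 2 * (n:ℝ) / (m:ℝ)^2)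
        = (k:ℝ) * ((m:ℝ) * (1 - En) - 2 * (n:ℝ)/(m:ℝ)) := by
      field_simp
    rw [hid]
    have hmul := mul_le_mul_of_nonneg_left hrlow (by linarith : (0:ℝ) ≤ (k:ℝ))
    linarith
  calc (m:ℝ) * (k:ℝ) * (1 - Real.exp (-(n:ℝ)/(m:ℝ)) - 2 * (n:ℝ) / (m:ℝ)^2)
      = (m:ℝ) * (k:ℝ) * (1 - En - 2 * (n:ℝ) / (m:ℝ)^2) := by rw [hEn_def]
  _ ≤ (r:ℝ) * (k:ℝ) := hfinal
  _ ≤ (Multiset.card L : ℝ) := hmain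
end

section
/- Let n ≥ 4 and let ℋ be a generic n × n half-grid in ℝ², given by sets {a₀ < a₁ < ⋯ < a_{n−1}} and {b₀ < b₁ < ⋯ < b_{n−1}} as ℋ = {(aᵢ, bⱼ) : i + j ≤ n − 1}, with vertex V = (a₀, b₀); here generic means every line in ℝ² that is not parallel to the x-axis or y-axis passes through at most 2 points of ℋ. Then for every positive integer k there exists a finite multiset of at most (3nk)/2 + k/2 lines in ℝ², none of which passes through V, that covers every point of ℋ ∖ {V} at least k times. -/
/-!
Take `k` copies of a single cover of `ℋ ∖ {V}` by `n + ⌊n/2⌋ - 1` lines avoiding `V`. With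
`m = ⌊n/2⌋`, the lines `x = aᵢ` and `y = bⱼ` for `1 ≤ i, j ≤ m` cover every point `(aᵢ, bⱼ)` with
`i, j ≥ 1`, because `i + j ≤ n - 1` forces `min i j ≤ m`, and also the axis points with index
at most `m`. The remaining axis points come in pairs `(a₀, bⱼ)`, `(aⱼ, b₀)` with `m < j < n`, and
the line through such a pair misses the vertex `(a₀, b₀)`.
-/

open scoped Classical

def vertLine (c : ℝ) : ℝ × ℝ × ℝ := (1, 0, c)

def horizLine (c : ℝ) : ℝ × ℝ × ℝ := (0, 1, c)

def lineThrough (p q : ℝ × ℝ) : ℝ × ℝ × ℝ := (p.2 - q.2, q.1 - p.1, p.2 * q.1 - p.1 * q.2)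

lemma isOnLine_vertLine {c : ℝ} {p : ℝ × ℝ} : IsOnLine (vertLine c) p ↔ p.1 = c := by
  simp [IsOnLine, vertLine]

lemma isOnLine_horizLine {c : ℝ} {p : ℝ × ℝ} : IsOnLine (horizLine c) p ↔ p.2 = c := by
  simp [IsOnLine, horizLine]

lemma isOnLine_lineThrough_left (p q : ℝ × ℝ) : IsOnLine (lineThrough p q) p := by
  simp only [IsOnLine, lineThrough]
  ring

lemma isOnLine_lineThrough_right (p q : ℝ × ℝ) : IsOnLine (lineThrough p q) q := by
  simp only [IsOnLine, lineThrough]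
  ring

lemma lineThrough_normal_ne_zero {p q : ℝ × ℝ} (h : p ≠ q) :
    ((lineThrough p q).1, (lineThrough p q).2.1) ≠ ((0 : ℝ), (0 : ℝ)) := by
  simp only [lineThrough, ne_eq, Prod.mk.injEq, sub_eq_zero, not_and]
  exact fun h₂ h₁ => h (Prod.ext h₁.symm h₂)

lemma not_isOnLine_lineThrough_corner {x₀ x₁ y₀ y₁ : ℝ} (hx : x₀ ≠ x₁) (hy : y₀ ≠ y₁) :
    ¬ IsOnLine (lineThrough (x₀, y₁) (x₁, y₀)) (x₀, y₀) := by
  intro h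
  simp only [IsOnLine, lineThrough] at h
  have : (x₁ - x₀) * (y₁ - y₀) = 0 := by linear_combination -h
  exact mul_ne_zero (sub_ne_zero.2 hx.symm) (sub_ne_zero.2 hy.symm) this

def halfGridCover (a b : ℕ → ℝ) (n : ℕ) : Multiset (ℝ × ℝ × ℝ) :=
  (Finset.Icc 1 (n / 2)).val.map (fun i => vertLine (a i)) +
  (Finset.Icc 1 (n / 2)).val.map (fun j => horizLine (b j)) +
  (Finset.Icc (n / 2 + 1) (n - 1)).val.map (fun j => lineThrough (a 0, b j) (a j, b 0))

section halfGridCover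

variable {a b : ℕ → ℝ} {n : ℕ}

lemma two_mul_card_halfGridCover_le : 2 * Multiset.card (halfGridCover a b n) ≤ 3 * n + 1 := by
  simp only [halfGridCover, Multiset.card_add, Multiset.card_map, Finset.card_val, Nat.card_Icc]
  omega

lemma normal_ne_zero_and_not_isOnLine_of_mem_halfGridCover (ha : ∀ i, 0 < i → i < n → a 0 ≠ a i)
    (hb : ∀ j, 0 < j → j < n → b 0 ≠ b j) {l : ℝ × ℝ × ℝ} (hl : l ∈ halfGridCover a b n) :
    (l.1, l.2.1) ≠ ((0 : ℝ), (0 : ℝ)) ∧ ¬ IsOnLine l (a 0, b 0) := by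
  simp only [halfGridCover, Multiset.mem_add, Multiset.mem_map, Finset.mem_val,
    Finset.mem_Icc] at hl
  rcases hl with (⟨i, hi, rfl⟩ | ⟨j, hj, rfl⟩) | ⟨j, hj, rfl⟩
  · refine ⟨by simp [vertLine], ?_⟩
    rw [isOnLine_vertLine]
    exact ha i (by omega) (by omega)
  · refine ⟨by simp [horizLine], ?_⟩
    rw [isOnLine_horizLine]
    exact hb j (by omega) (by omega)
  · have hbj := hb j (by omega) (by omega)
    refine ⟨lineThrough_normal_ne_zero fun h => hbj (congrArg Prod.snd h).symm, ?_⟩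
    exact not_isOnLine_lineThrough_corner (ha j (by omega) (by omega)) hbj

lemma exists_mem_halfGridCover_isOnLine {i j : ℕ} (hij : i + j ≤ n - 1)
    (h0 : (i, j) ≠ (0, 0)) : ∃ l ∈ halfGridCover a b n, IsOnLine l (a i, b j) := by
  simp only [halfGridCover, Multiset.mem_add, Multiset.mem_map, Finset.mem_val,
    Finset.mem_Icc, ne_eq, Prod.mk.injEq, not_and] at h0 ⊢
  by_cases hi_small : 1 ≤ i ∧ i ≤ n / 2
  · exact ⟨_, Or.inl (Or.inl ⟨i, hi_small, rfl⟩), isOnLine_vertLine.2 rfl⟩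
  by_cases hj_small : 1 ≤ j ∧ j ≤ n / 2
  · exact ⟨_, Or.inl (Or.inr ⟨j, hj_small, rfl⟩), isOnLine_horizLine.2 rfl⟩
  obtain ⟨rfl, hj_large⟩ | ⟨rfl, hi_large⟩ :
      (i = 0 ∧ n / 2 + 1 ≤ j ∧ j ≤ n - 1) ∨ (j = 0 ∧ n / 2 + 1 ≤ i ∧ i ≤ n - 1) := by omega
  · exact ⟨_, Or.inr ⟨j, hj_large, rfl⟩, isOnLine_lineThrough_left _ _⟩
  · exact ⟨_, Or.inr ⟨i, hi_large, rfl⟩, isOnLine_lineThrough_right _ _⟩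

end halfGridCover

theorem stmt_4_general (n : ℕ) (a b : ℕ → ℝ)
    -- a₀ < a₁ < ⋯ < a_{n-1} and b₀ < b₁ < ⋯ < b_{n-1}
    (ha : ∀ i j : ℕ, i < j → j < n → a i < a j)
    (hb : ∀ i j : ℕ, i < j → j < n → b i < b j)
    -- the n × n half-grid ℋ = {(aᵢ, bⱼ) : i + j ≤ n - 1}
    (H : Finset (ℝ × ℝ))
    (hH : H = ((Finset.range n ×ˢ Finset.range n).filter
      (fun q => q.1 + q.2 ≤ n - 1)).image (fun q => (a q.1, b q.2)))
    (k : ℕ) :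
    ∃ L : Multiset (ℝ × ℝ × ℝ),
      (∀ l ∈ L, (l.1, l.2.1) ≠ ((0 : ℝ), (0 : ℝ))) ∧
      -- no line of L passes through the vertex V = (a₀, b₀)
      (∀ l ∈ L, ¬ IsOnLine l (a 0, b 0)) ∧
      -- L has at most (3nk)/2 + k/2 lines
      (Multiset.card L : ℝ) ≤ 3 * (n : ℝ) * (k : ℝ) / 2 + (k : ℝ) / 2 ∧
      -- L covers every point of ℋ ∖ {V} at least k times
      (∀ p ∈ H, p ≠ (a 0, b 0) → k ≤ L.countP (fun l => IsOnLine l p)) := by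
  have hmem (l) (hl : l ∈ k • halfGridCover a b n) :=
    normal_ne_zero_and_not_isOnLine_of_mem_halfGridCover (fun i hi hin => (ha 0 i hi hin).ne)
      (fun j hj hjn => (hb 0 j hj hjn).ne) (Multiset.mem_of_mem_nsmul hl)
  refine ⟨k • halfGridCover a b n, fun l hl => (hmem l hl).1, fun l hl => (hmem l hl).2, ?_, ?_⟩
  · have hcard : (2 * Multiset.card (halfGridCover a b n) : ℝ) ≤ 3 * n + 1 := by
      exact_mod_cast two_mul_card_halfGridCover_le
    rw [Multiset.card_nsmul, Nat.cast_mul]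
    nlinarith [(k.cast_nonneg : (0 : ℝ) ≤ k)]
  · intro p hp hpV
    rw [hH] at hp
    simp only [Finset.mem_image, Finset.mem_filter, Finset.mem_product, Finset.mem_range] at hp
    obtain ⟨⟨i, j⟩, ⟨-, hij⟩, rfl⟩ := hp
    have h0 : (i, j) ≠ (0, 0) := by rintro ⟨⟩; exact hpV rfl
    rw [Multiset.countP_nsmul]
    exact Nat.le_mul_of_pos_right k
      (Multiset.countP_pos.2 (exists_mem_halfGridCover_isOnLine hij h0))

theorem stmt_4 (n : ℕ) (hn : 4 ≤ n) (a b : ℕ → ℝ)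
    -- a₀ < a₁ < ⋯ < a_{n-1} and b₀ < b₁ < ⋯ < b_{n-1}
    (ha : ∀ i j : ℕ, i < j → j < n → a i < a j)
    (hb : ∀ i j : ℕ, i < j → j < n → b i < b j)
    -- the n × n half-grid ℋ = {(aᵢ, bⱼ) : i + j ≤ n - 1}
    (H : Finset (ℝ × ℝ))
    (hH : H = ((Finset.range n ×ˢ Finset.range n).filter
      (fun q => q.1 + q.2 ≤ n - 1)).image (fun q => (a q.1, b q.2)))
    -- genericity: every line not parallel to the x-axis or y-axis passes through
    -- at most 2 points of ℋ
    (hgen : ∀ u v c : ℝ, u ≠ 0 → v ≠ 0 →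
      (H.filter (fun p => u * p.1 + v * p.2 = c)).card ≤ 2)
    (k : ℕ) (hk : 0 < k) :
    ∃ L : Multiset (ℝ × ℝ × ℝ),
      (∀ l ∈ L, (l.1, l.2.1) ≠ ((0 : ℝ), (0 : ℝ))) ∧
      -- no line of L passes through the vertex V = (a₀, b₀)
      (∀ l ∈ L, ¬ IsOnLine l (a 0, b 0)) ∧
      -- L has at most (3nk)/2 + k/2 lines
      (Multiset.card L : ℝ) ≤ 3 * (n : ℝ) * (k : ℝ) / 2 + (k : ℝ) / 2 ∧
      -- L covers every point of ℋ ∖ {V} at least k times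
      (∀ p ∈ H, p ≠ (a 0, b 0) → k ≤ L.countP (fun l => IsOnLine l p)) :=
  stmt_4_general n a b ha hb H hH k
end

section
/- Let n ≥ 4 and let ℋ be a generic n × n half-grid in ℝ², given by sets {a₀ < a₁ < ⋯ < a_{n−1}} and {b₀ < b₁ < ⋯ < b_{n−1}} as ℋ = {(aᵢ, bⱼ) : i + j ≤ n − 1}, with vertex V = (a₀, b₀); here generic means every line in ℝ² that is not parallel to the x-axis or y-axis passes through at most 2 points of ℋ. Then for every positive integer k, any finite multiset of lines in ℝ², none of which passes through V, that covers every point of ℋ ∖ {V} at least k times has size at least (3nk)/2 − 2k. -/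
open scoped Classical

/-!
Remove the vertex from the boundary of ℋ (bottom row, left column and hypotenuse); what is left
has 3n - 4 points. A line avoiding V meets it in at most two of them: a horizontal line misses
the bottom row and meets the left column and the hypotenuse at most once each, vertical lines
likewise, and every other line meets all of ℋ in at most two points by genericity. Counting the
incidences between L and these points then gives k (3n - 4) ≤ 2 |L|.
-/

open Finset

theorem sum_countP_eq_sum_map_card_filter {α β : Type*} (s : Finset α) (L : Multiset β)
    (r : β → α → Prop) :
    ∑ x ∈ s, L.countP (r · x) = (L.map fun l => #{x ∈ s | r l x}).sum := by
  induction L using Multiset.induction with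
  | empty => simp
  | cons l L ih =>
    simp only [Multiset.countP_cons, Finset.sum_add_distrib, ih, Multiset.map_cons,
      Multiset.sum_cons, Finset.card_filter]
    rw [add_comm]

theorem mul_card_le_mul_card_of_le_countP {α β : Type*} {s : Finset α} {L : Multiset β}
    {r : β → α → Prop} {k m : ℕ} (hcover : ∀ x ∈ s, k ≤ L.countP (r · x))
    (hline : ∀ l ∈ L, #{x ∈ s | r l x} ≤ m) :
    k * #s ≤ m * Multiset.card L :=
  calc k * #s = ∑ _x ∈ s, k := by rw [sum_const, smul_eq_mul, mul_comm]
    _ ≤ ∑ x ∈ s, L.countP (r · x) := sum_le_sum hcover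
    _ = (L.map fun l => #{x ∈ s | r l x}).sum := sum_countP_eq_sum_map_card_filter s L r
    _ ≤ m * Multiset.card L := by
      simpa [mul_comm] using
        Multiset.sum_le_card_nsmul _ m (Multiset.forall_mem_map_iff.mpr hline)

def cornerlessBoundary (n : ℕ) : Finset (ℕ × ℕ) :=
  (Ico 1 n ×ˢ {0} ∪ {0} ×ˢ Ico 1 n) ∪ (Ioo 0 (n - 1)).image fun i => (i, n - 1 - i)

section Boundary

variable {n : ℕ}

theorem mem_cornerlessBoundary {q : ℕ × ℕ} :
    q ∈ cornerlessBoundary n ↔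
      q ≠ (0, 0) ∧ q.1 + q.2 ≤ n - 1 ∧ (q.1 = 0 ∨ q.2 = 0 ∨ q.1 + q.2 = n - 1) := by
  obtain ⟨i, j⟩ := q
  simp only [cornerlessBoundary, mem_union, mem_product, mem_Ico, mem_singleton, mem_image,
    mem_Ioo, Prod.mk.injEq, ne_eq]
  constructor
  · rintro ((⟨⟨h1, h2⟩, rfl⟩ | ⟨rfl, h1, h2⟩) | ⟨i', ⟨h1, h2⟩, rfl, rfl⟩) <;> omega
  · intro h
    by_cases hi : i = 0
    · omega
    by_cases hj : j = 0
    · omega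
    exact Or.inr ⟨i, by omega, rfl, by omega⟩

theorem card_cornerlessBoundary : #(cornerlessBoundary n) = 3 * n - 4 := by
  have hdiag : #((Ioo 0 (n - 1)).image fun i => (i, n - 1 - i)) = n - 2 := by
    rw [card_image_of_injective _ fun i j h => (Prod.mk.inj h).1, Nat.card_Ioo]
    omega
  rw [cornerlessBoundary, card_union_of_disjoint, card_union_of_disjoint, card_product,
    card_product, hdiag]
  · simp only [Nat.card_Ico, card_singleton]
    omega
  all_goals
    rw [disjoint_left]
    rintro ⟨i, j⟩
    simp only [mem_union, mem_product, mem_Ico, mem_singleton, mem_image, mem_Ioo, Prod.mk.injEq]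
    omega

theorem cornerlessBoundary_subset_halfGrid :
    cornerlessBoundary n ⊆ {q ∈ range n ×ˢ range n | q.1 + q.2 ≤ n - 1} := by
  rintro ⟨i, j⟩ hq
  rw [mem_cornerlessBoundary] at hq
  simp only [mem_filter, mem_product, mem_range, ne_eq, Prod.mk.injEq] at hq ⊢
  omega

theorem cornerlessBoundary_subset_Iio_prod :
    (cornerlessBoundary n : Set (ℕ × ℕ)) ⊆ Set.Iio n ×ˢ Set.Iio n := by
  intro q hq
  have := cornerlessBoundary_subset_halfGrid hq
  simp only [mem_filter, mem_product, mem_range] at this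
  exact ⟨this.1.1, this.1.2⟩

theorem card_filter_snd_eq_le_two {j : ℕ} (hj : j ≠ 0) :
    #{q ∈ cornerlessBoundary n | q.2 = j} ≤ 2 := by
  refine (card_le_card fun q hq => ?_).trans (card_le_two (a := (0, j)) (b := (n - 1 - j, j)))
  rw [mem_filter, mem_cornerlessBoundary] at hq
  obtain ⟨i, j'⟩ := q
  simp only [mem_insert, mem_singleton, Prod.mk.injEq] at hq ⊢
  omega

theorem card_filter_fst_eq_le_two {i : ℕ} (hi : i ≠ 0) :
    #{q ∈ cornerlessBoundary n | q.1 = i} ≤ 2 := by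
  refine (card_le_card fun q hq => ?_).trans (card_le_two (a := (i, 0)) (b := (i, n - 1 - i)))
  rw [mem_filter, mem_cornerlessBoundary] at hq
  obtain ⟨i', j⟩ := q
  simp only [mem_insert, mem_singleton, Prod.mk.injEq] at hq ⊢
  omega

end Boundary

theorem card_filter_le_of_card_fiber_le {ι κ : Type*} [DecidableEq κ] {s : Finset ι}
    {π : ι → κ} {P : κ → Prop} {m : ℕ} (hP : ∀ i ∈ s, ∀ i' ∈ s, P (π i) → P (π i') → π i = π i')
    (hfiber : ∀ i ∈ s, P (π i) → #{i' ∈ s | π i' = π i} ≤ m) :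
    #{i ∈ s | P (π i)} ≤ m := by
  rcases {i ∈ s | P (π i)}.eq_empty_or_nonempty with h | ⟨i₀, hi₀⟩
  · simp [h]
  rw [mem_filter] at hi₀
  refine (card_le_card fun i hi => ?_).trans (hfiber i₀ hi₀.1 hi₀.2)
  rw [mem_filter] at hi ⊢
  exact ⟨hi.1, hP i hi.1 i₀ hi₀.1 hi.2 hi₀.2⟩

section Grid

variable {n : ℕ} {a b : ℕ → ℝ}

theorem card_filter_horizontal_le_two (hb : Set.InjOn b (Set.Iio n)) {v c : ℝ}
    (hV : v * b 0 ≠ c) : #{q ∈ cornerlessBoundary n | v * b q.2 = c} ≤ 2 := by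
  refine card_filter_le_of_card_fiber_le (P := fun j => v * b j = c) ?_
    fun q _ hq => card_filter_snd_eq_le_two fun h0 => hV (h0 ▸ hq)
  intro q hq q' hq' h h'
  have hv : v ≠ 0 := by rintro rfl; simp_all
  exact hb (cornerlessBoundary_subset_Iio_prod hq).2 (cornerlessBoundary_subset_Iio_prod hq').2
    (mul_left_cancel₀ hv (h.trans h'.symm))

theorem card_filter_vertical_le_two (ha : Set.InjOn a (Set.Iio n)) {u c : ℝ}
    (hV : u * a 0 ≠ c) : #{q ∈ cornerlessBoundary n | u * a q.1 = c} ≤ 2 := by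
  refine card_filter_le_of_card_fiber_le (P := fun i => u * a i = c) ?_
    fun q _ hq => card_filter_fst_eq_le_two fun h0 => hV (h0 ▸ hq)
  intro q hq q' hq' h h'
  have hu : u ≠ 0 := by rintro rfl; simp_all
  exact ha (cornerlessBoundary_subset_Iio_prod hq).1 (cornerlessBoundary_subset_Iio_prod hq').1
    (mul_left_cancel₀ hu (h.trans h'.symm))

theorem card_filter_isOnLine_le_two (ha : Set.InjOn a (Set.Iio n)) (hb : Set.InjOn b (Set.Iio n))
    (hgen : ∀ u v c : ℝ, u ≠ 0 → v ≠ 0 →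
      #{p ∈ (cornerlessBoundary n).image (Prod.map a b) | u * p.1 + v * p.2 = c} ≤ 2)
    {l : ℝ × ℝ × ℝ} (hl : ¬ IsOnLine l (a 0, b 0)) :
    #{q ∈ cornerlessBoundary n | IsOnLine l (Prod.map a b q)} ≤ 2 := by
  obtain ⟨u, v, c⟩ := l
  simp only [IsOnLine] at hl
  rcases eq_or_ne u 0 with rfl | hu
  · convert card_filter_horizontal_le_two hb (v := v) (c := c) (by simpa using hl) using 3
    simp [IsOnLine]
  rcases eq_or_ne v 0 with rfl | hv
  · convert card_filter_vertical_le_two ha (u := u) (c := c) (by simpa using hl) using 3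
    simp [IsOnLine]
  have hinj : Set.InjOn (Prod.map a b) (cornerlessBoundary n) :=
    (ha.prodMap hb).mono cornerlessBoundary_subset_Iio_prod
  rw [← card_image_of_injOn (hinj.mono (filter_subset _ _)),
    ← filter_image (p := IsOnLine (u, v, c))]
  exact hgen u v c hu hv

theorem prodMap_ne_of_mem_cornerlessBoundary (ha : Set.InjOn a (Set.Iio n))
    (hb : Set.InjOn b (Set.Iio n)) {q : ℕ × ℕ} (hq : q ∈ cornerlessBoundary n) :
    Prod.map a b q ≠ (a 0, b 0) := by
  have hlt := cornerlessBoundary_subset_Iio_prod hq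
  have hn : 0 < n := Nat.zero_lt_of_lt hlt.1
  intro h
  rw [Prod.map, Prod.mk.injEq] at h
  exact (mem_cornerlessBoundary.mp hq).1
    (Prod.ext (ha hlt.1 hn h.1) (hb hlt.2 hn h.2))

end Grid

theorem stmt_5_general (n : ℕ) (a b : ℕ → ℝ)
    -- a₀ < a₁ < ⋯ < a_{n-1} and b₀ < b₁ < ⋯ < b_{n-1}
    (ha : ∀ i j : ℕ, i < j → j < n → a i < a j)
    (hb : ∀ i j : ℕ, i < j → j < n → b i < b j)
    -- the n × n half-grid ℋ = {(aᵢ, bⱼ) : i + j ≤ n - 1}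
    (H : Finset (ℝ × ℝ))
    (hH : H = ((Finset.range n ×ˢ Finset.range n).filter
      (fun q => q.1 + q.2 ≤ n - 1)).image (fun q => (a q.1, b q.2)))
    -- genericity: every line not parallel to the x-axis or y-axis passes through
    -- at most 2 points of ℋ
    (hgen : ∀ u v c : ℝ, u ≠ 0 → v ≠ 0 →
      (H.filter (fun p => u * p.1 + v * p.2 = c)).card ≤ 2)
    (k : ℕ)
    (L : Multiset (ℝ × ℝ × ℝ))
    -- no line of L passes through the vertex V = (a₀, b₀)
    (hmiss : ∀ l ∈ L, ¬ IsOnLine l (a 0, b 0))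
    -- L covers every point of ℋ ∖ {V} at least k times
    (hcover : ∀ p ∈ H, p ≠ (a 0, b 0) → k ≤ L.countP (fun l => IsOnLine l p)) :
    3 * (n : ℝ) * (k : ℝ) / 2 - 2 * (k : ℝ) ≤ (Multiset.card L : ℝ) := by
  have ha' : Set.InjOn a (Set.Iio n) := StrictMonoOn.injOn fun i _ j hj hij => ha i j hij hj
  have hb' : Set.InjOn b (Set.Iio n) := StrictMonoOn.injOn fun i _ j hj hij => hb i j hij hj
  have hTH : (cornerlessBoundary n).image (Prod.map a b) ⊆ H := by
    rw [hH]
    exact image_subset_image cornerlessBoundary_subset_halfGrid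
  have hcount : k * #(cornerlessBoundary n) ≤ 2 * Multiset.card L :=
    mul_card_le_mul_card_of_le_countP
      (fun q hq => hcover _ (hTH (mem_image_of_mem _ hq))
        (prodMap_ne_of_mem_cornerlessBoundary ha' hb' hq))
      (fun l hl => card_filter_isOnLine_le_two ha' hb'
        (fun u v c hu hv => (card_le_card (filter_subset_filter _ hTH)).trans (hgen u v c hu hv))
        (hmiss l hl))
  have hsize : 3 * n ≤ #(cornerlessBoundary n) + 4 := by
    rw [card_cornerlessBoundary]
    omega
  have : k * (3 * n) ≤ 2 * Multiset.card L + 4 * k := by nlinarith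
  have : (k : ℝ) * (3 * n) ≤ 2 * Multiset.card L + 4 * k := by exact_mod_cast this
  linarith

theorem stmt_5 (n : ℕ) (hn : 4 ≤ n) (a b : ℕ → ℝ)
    -- a₀ < a₁ < ⋯ < a_{n-1} and b₀ < b₁ < ⋯ < b_{n-1}
    (ha : ∀ i j : ℕ, i < j → j < n → a i < a j)
    (hb : ∀ i j : ℕ, i < j → j < n → b i < b j)
    -- the n × n half-grid ℋ = {(aᵢ, bⱼ) : i + j ≤ n - 1}
    (H : Finset (ℝ × ℝ))
    (hH : H = ((Finset.range n ×ˢ Finset.range n).filter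
      (fun q => q.1 + q.2 ≤ n - 1)).image (fun q => (a q.1, b q.2)))
    -- genericity: every line not parallel to the x-axis or y-axis passes through
    -- at most 2 points of ℋ
    (hgen : ∀ u v c : ℝ, u ≠ 0 → v ≠ 0 →
      (H.filter (fun p => u * p.1 + v * p.2 = c)).card ≤ 2)
    (k : ℕ) (hk : 0 < k)
    (L : Multiset (ℝ × ℝ × ℝ))
    (hL : ∀ l ∈ L, (l.1, l.2.1) ≠ ((0 : ℝ), (0 : ℝ)))
    -- no line of L passes through the vertex V = (a₀, b₀)
    (hmiss : ∀ l ∈ L, ¬ IsOnLine l (a 0, b 0))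
    -- L covers every point of ℋ ∖ {V} at least k times
    (hcover : ∀ p ∈ H, p ≠ (a 0, b 0) → k ≤ L.countP (fun l => IsOnLine l p)) :
    3 * (n : ℝ) * (k : ℝ) / 2 - 2 * (k : ℝ) ≤ (Multiset.card L : ℝ) :=
  stmt_5_general n a b ha hb H hH hgen k L hmiss hcover
end

section
/- Let 2 ≤ m ≤ n be integers, let ℋ be the m × n half-rectangular grid, i.e., the set of integer points (x, y) ∈ ℤ² with 0 ≤ x ≤ n − 1, 0 ≤ y ≤ m − 1, and (m−1)·x + (n−1)·y ≤ (m−1)·(n−1), and let P = (x₀, y₀) be a point of ℋ. Then any finite set of lines in ℝ², none of which passes through P, whose union contains every point of ℋ ∖ {P}, has size at least n − ⌈((n−m)/(m−1))·y₀⌉ − 1. -/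
/-
Write a = m - 1 and b = n - 1, so that ℋ is the set of lattice points of the triangle
a x + b y ≤ B with B = a b, and argue by induction on y₀ for an arbitrary right-hand side B.
If the x-axis is not one of the lines, each line meets the bottom row in at most one point, so
the B / a + 1 points (x, 0) with a x ≤ B (all but P when y₀ = 0) need that many lines.
Otherwise remove the x-axis and translate the remaining lines down by one: they cover the
triangle with right-hand side B - b and miss (x₀, y₀ - 1). The resulting bound
(B - b y₀) / a + y₀ is, for B = a b, the one claimed.
-/

open scoped Classical

/-- `IsLine s` means that `s ⊆ ℝ²` is a line, i.e. of the form
`{(x, y) | u * x + v * y = c}` with `(u, v) ≠ (0, 0)`. -/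
def IsLine (s : Set (ℝ × ℝ)) : Prop :=
  ∃ u v c : ℝ, (u, v) ≠ ((0 : ℝ), (0 : ℝ)) ∧ s = {p : ℝ × ℝ | u * p.1 + v * p.2 = c}

open Finset

def xAxis : Set (ℝ × ℝ) := {p | p.2 = 0}

lemma IsLine.eq_xAxis {s : Set (ℝ × ℝ)} (hs : IsLine s) {x x' : ℝ}
    (h : (x, 0) ∈ s) (h' : (x', 0) ∈ s) (hne : x ≠ x') : s = xAxis := by
  obtain ⟨u, v, c, huv, rfl⟩ := hs
  simp only [Set.mem_ofPred_eq, mul_zero, add_zero] at h h'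
  have hu : u = 0 := by
    by_contra hu
    exact hne (mul_left_cancel₀ hu (h.trans h'.symm))
  subst hu
  have hv : v ≠ 0 := by rintro rfl; exact huv rfl
  ext p
  simp [xAxis, ← h, hv]

lemma IsLine.preimage_add {s : Set (ℝ × ℝ)} (hs : IsLine s) (w : ℝ × ℝ) :
    IsLine ((· + w) ⁻¹' s) := by
  obtain ⟨u, v, c, huv, rfl⟩ := hs
  refine ⟨u, v, c - u * w.1 - v * w.2, huv, ?_⟩
  ext p
  simp only [Set.mem_preimage, Set.mem_ofPred_eq, Prod.fst_add, Prod.snd_add]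
  constructor <;> intro h <;> linarith

lemma card_le_card_of_cover_xAxis {L : Finset (Set (ℝ × ℝ))} (hline : ∀ s ∈ L, IsLine s)
    (hL : xAxis ∉ L) {S : Finset ℕ} (hcover : ∀ x ∈ S, ∃ s ∈ L, ((x : ℝ), (0 : ℝ)) ∈ s) :
    #S ≤ #L := by
  refine card_le_card_of_forall_subsingleton
    (fun (x : ℕ) (s : Set (ℝ × ℝ)) => ((x : ℝ), (0 : ℝ)) ∈ s) hcover ?_
  rintro s hs x ⟨-, hx⟩ x' ⟨-, hx'⟩
  by_contra hne
  exact hL (hline s hs |>.eq_xAxis hx hx' (by exact_mod_cast hne) ▸ hs)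

structure IsCoverMissing (L : Finset (Set (ℝ × ℝ))) (a b B x₀ y₀ : ℕ) : Prop where
  isLine : ∀ s ∈ L, IsLine s
  not_mem : ∀ s ∈ L, ((x₀ : ℝ), (y₀ : ℝ)) ∉ s
  cover : ∀ x y : ℕ, a * x + b * y ≤ B → (x, y) ≠ (x₀, y₀) → ∃ s ∈ L, ((x : ℝ), (y : ℝ)) ∈ s

noncomputable def shiftDown (L : Finset (Set (ℝ × ℝ))) : Finset (Set (ℝ × ℝ)) :=
  (L.erase xAxis).image ((· + ((0 : ℝ), (1 : ℝ))) ⁻¹' ·)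

lemma card_shiftDown {L : Finset (Set (ℝ × ℝ))} (hL : xAxis ∈ L) : #(shiftDown L) + 1 = #L := by
  rw [shiftDown, card_image_of_injective _ (Set.preimage_injective.2 (add_right_surjective _)),
    card_erase_add_one hL]

lemma cast_mem_preimage_add_up_iff (x y : ℕ) (t : Set (ℝ × ℝ)) :
    ((x : ℝ), (y : ℝ)) ∈ (· + ((0 : ℝ), (1 : ℝ))) ⁻¹' t ↔ ((x : ℝ), ((y + 1 : ℕ) : ℝ)) ∈ t := by
  simp

namespace IsCoverMissing

variable {L : Finset (Set (ℝ × ℝ))} {a b B x₀ y₀ : ℕ}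

lemma shiftDown (h : IsCoverMissing L a b B x₀ (y₀ + 1)) (hb : b ≤ B) :
    IsCoverMissing (shiftDown L) a b (B - b) x₀ y₀ where
  isLine := by
    simp only [_root_.shiftDown, mem_image, mem_erase]
    rintro _ ⟨t, ⟨-, ht⟩, rfl⟩
    exact (h.isLine t ht).preimage_add _
  not_mem := by
    simp only [_root_.shiftDown, mem_image, mem_erase]
    rintro _ ⟨t, ⟨-, ht⟩, rfl⟩
    rw [cast_mem_preimage_add_up_iff]
    exact h.not_mem t ht
  cover x y hxy hne := by
    obtain ⟨t, ht, hxt⟩ := h.cover x (y + 1) (by rw [mul_add_one]; omega) (by simpa using hne)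
    have htx : t ≠ xAxis := by
      rintro rfl
      exact Nat.cast_ne_zero.2 y.succ_ne_zero hxt
    exact ⟨_, mem_image_of_mem _ (mem_erase.2 ⟨htx, ht⟩),
      (cast_mem_preimage_add_up_iff x y t).2 hxt⟩

lemma cover_xAxis (h : IsCoverMissing L a b B x₀ y₀) {x : ℕ} (hx : x ∈ range (B / a + 1))
    (hne : (x, 0) ≠ (x₀, y₀)) : ∃ s ∈ L, ((x : ℝ), (0 : ℝ)) ∈ s := by
  have hxB : x * a ≤ B := Nat.mul_le_of_le_div _ _ _ (Nat.lt_succ_iff.1 (mem_range.1 hx))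
  simpa using h.cover x 0 (by linarith) hne

theorem le_card (ha : 0 < a) (hab : a ≤ b) (h : IsCoverMissing L a b B x₀ y₀)
    (hP : a * x₀ + b * y₀ ≤ B) : (B - b * y₀) / a + y₀ ≤ #L := by
  induction y₀ generalizing B L with
  | zero =>
    have hx₀ : x₀ ∈ range (B / a + 1) :=
      mem_range.2 (Nat.lt_succ_of_le ((Nat.le_div_iff_mul_le ha).2 (by linarith)))
    have hrow := card_le_card_of_cover_xAxis h.isLine (fun hL => h.not_mem _ hL (by simp [xAxis]))
      (S := (range (B / a + 1)).erase x₀)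
      fun x hx => h.cover_xAxis (mem_of_mem_erase hx) (by simpa using ne_of_mem_erase hx)
    simpa [card_erase_of_mem hx₀] using hrow
  | succ y ih =>
    have hsucc : b * (y + 1) = b * y + b := mul_add_one b y
    by_cases hL : xAxis ∈ L
    · have hb : b ≤ B := by omega
      have hshift := ih (h.shiftDown hb) (by omega)
      have hcardL := card_shiftDown hL
      rw [hsucc, add_comm (b * y) b, ← Nat.sub_sub]
      omega
    · have hrow := card_le_card_of_cover_xAxis h.isLine hL (S := range (B / a + 1))
        fun x hx => h.cover_xAxis hx (by simp)
      rw [card_range] at hrow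
      suffices (B - b * (y + 1)) / a + y ≤ B / a by omega
      rw [← Nat.add_mul_div_left _ _ ha]
      apply Nat.div_le_div_right
      have : a * y ≤ b * y := Nat.mul_le_mul_right y hab
      omega

end IsCoverMissing

lemma sub_ceil_le (a b y : ℕ) (ha : 0 < a) (hy : b * y ≤ a * b) :
    (b : ℤ) - ⌈((b : ℝ) - a) / a * y⌉ ≤ ((a * b - b * y) / a + y : ℕ) := by
  have hdiv := Nat.div_add_mod (a * b - b * y) a
  have hmod := Nat.mod_lt (a * b - b * y) ha
  set D := (a * b - b * y) / a
  set r := (a * b - b * y) % a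
  have hlt : (b : ℝ) - D - y - 1 < ((b : ℝ) - a) / a * y := by
    have ha' : (0 : ℝ) < a := by exact_mod_cast ha
    have hdivR : (a : ℝ) * D + r = a * b - b * y := by
      zify [hy] at hdiv
      exact_mod_cast hdiv
    have hmodR : (r : ℝ) < a := by exact_mod_cast hmod
    rw [div_mul_eq_mul_div, lt_div_iff₀ ha']
    linarith
  have : (b : ℤ) - D - y - 1 < ⌈((b : ℝ) - a) / a * y⌉ := Int.lt_ceil.2 (by exact_mod_cast hlt)
  rw [Nat.cast_add]
  omega

theorem stmt_6_general (m n : ℕ) (hm : 2 ≤ m) (hmn : m ≤ n)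
    -- P = (x₀, y₀) is a point of the m × n half-rectangular grid
    (x₀ y₀ : ℕ)
    (hP : (m - 1) * x₀ + (n - 1) * y₀ ≤ (m - 1) * (n - 1))
    -- L is a finite set of lines in ℝ²
    (L : Finset (Set (ℝ × ℝ)))
    (hline : ∀ s ∈ L, IsLine s)
    -- no line of L passes through P
    (hmiss : ∀ s ∈ L, ((x₀ : ℝ), (y₀ : ℝ)) ∉ s)
    -- every point of ℋ ∖ {P} lies on some line of L
    (hcover : ∀ x y : ℕ, x ≤ n - 1 → y ≤ m - 1 →
      (m - 1) * x + (n - 1) * y ≤ (m - 1) * (n - 1) → (x, y) ≠ (x₀, y₀) →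
      ∃ s ∈ L, ((x : ℝ), (y : ℝ)) ∈ s) :
    (n : ℤ) - ⌈(((n : ℝ) - (m : ℝ)) / ((m : ℝ) - 1)) * (y₀ : ℝ)⌉ - 1 ≤ (L.card : ℤ) := by
  obtain ⟨a, rfl⟩ : ∃ a, m = a + 1 := ⟨m - 1, by omega⟩
  obtain ⟨b, rfl⟩ : ∃ b, n = b + 1 := ⟨n - 1, by omega⟩
  simp only [Nat.add_sub_cancel] at hP hcover
  have ha : 0 < a := by omega
  have hb : 0 < b := by omega
  have h : IsCoverMissing L a b (a * b) x₀ y₀ :=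
    ⟨hline, hmiss, fun x y hxy => hcover x y (Nat.le_of_mul_le_mul_left (by omega) ha)
      (Nat.le_of_mul_le_mul_left (by rw [mul_comm b a]; omega) hb) hxy⟩
  have hcard := h.le_card ha (by omega) hP
  have hceil := sub_ceil_le a b y₀ ha (by omega)
  have hslope : ((b : ℝ) + 1 - (a + 1)) / (a + 1 - 1) = (b - a) / a := by ring
  push_cast
  rw [hslope]
  omega

theorem stmt_6 (m n : ℕ) (hm : 2 ≤ m) (hmn : m ≤ n)
    -- P = (x₀, y₀) is a point of the m × n half-rectangular grid
    (x₀ y₀ : ℕ) (hx₀ : x₀ ≤ n - 1) (hy₀ : y₀ ≤ m - 1)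
    (hP : (m - 1) * x₀ + (n - 1) * y₀ ≤ (m - 1) * (n - 1))
    -- L is a finite set of lines in ℝ²
    (L : Finset (Set (ℝ × ℝ)))
    (hline : ∀ s ∈ L, IsLine s)
    -- no line of L passes through P
    (hmiss : ∀ s ∈ L, ((x₀ : ℝ), (y₀ : ℝ)) ∉ s)
    -- every point of ℋ ∖ {P} lies on some line of L
    (hcover : ∀ x y : ℕ, x ≤ n - 1 → y ≤ m - 1 →
      (m - 1) * x + (n - 1) * y ≤ (m - 1) * (n - 1) → (x, y) ≠ (x₀, y₀) →
      ∃ s ∈ L, ((x : ℝ), (y : ℝ)) ∈ s) :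
    (n : ℤ) - ⌈(((n : ℝ) - (m : ℝ)) / ((m : ℝ) - 1)) * (y₀ : ℝ)⌉ - 1 ≤ (L.card : ℤ) :=
  stmt_6_general m n hm hmn x₀ y₀ hP L hline hmiss hcover
end

section
/- Let 2 ≤ m ≤ n be integers, let ℋ be the m × n half-rectangular grid, i.e., the set of integer points (x, y) ∈ ℤ² with 0 ≤ x ≤ n − 1, 0 ≤ y ≤ m − 1, and (m−1)·x + (n−1)·y ≤ (m−1)·(n−1), and let P = (x₀, y₀) be a point of ℋ. Then there exists a set of exactly n − ⌈((n−m)/(m−1))·y₀⌉ − 1 lines in ℝ², none of which passes through P, whose union contains every point of ℋ ∖ {P}. -/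
/-!
Every grid point `(x, y)` with `y ≥ y₀` satisfies `(m - 1)(x + y) ≤ (m - 1)(n - 1) - (n - m) y₀`,
because `(n - 1) y ≥ (m - 1) y + (n - m) y₀`; hence `x + y ≤ D := n - 1 - ⌈(n - m) y₀ / (m - 1)⌉`.
So a grid point with `x ≥ x₀`, `y ≥ y₀` other than `P = (x₀, y₀)` lies on an antidiagonal
`x + y = s` with `x₀ + y₀ < s ≤ D`. These `D - x₀ - y₀` antidiagonals, the `y₀` rows below `P`
and the `x₀` columns left of `P` are `D` lines, none through `P`, covering the grid minus `P`.
-/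

open scoped Classical

def horizontalLine (c : ℝ) : Set (ℝ × ℝ) := {p | p.2 = c}

def verticalLine (c : ℝ) : Set (ℝ × ℝ) := {p | p.1 = c}

def antidiagonalLine (c : ℝ) : Set (ℝ × ℝ) := {p | p.1 + p.2 = c}

lemma isLine_horizontalLine (c : ℝ) : IsLine (horizontalLine c) :=
  ⟨0, 1, c, by simp, by ext p; simp [horizontalLine]⟩

lemma isLine_verticalLine (c : ℝ) : IsLine (verticalLine c) :=
  ⟨1, 0, c, by simp, by ext p; simp [verticalLine]⟩

lemma isLine_antidiagonalLine (c : ℝ) : IsLine (antidiagonalLine c) :=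
  ⟨1, 1, c, by simp, by ext p; simp [antidiagonalLine]⟩

lemma horizontalLine_injective : Function.Injective horizontalLine := by
  intro c d h
  simpa [horizontalLine] using (Set.ext_iff.mp h (0, c)).mp rfl

lemma verticalLine_injective : Function.Injective verticalLine := by
  intro c d h
  simpa [verticalLine] using (Set.ext_iff.mp h (c, 0)).mp rfl

lemma antidiagonalLine_injective : Function.Injective antidiagonalLine := by
  intro c d h
  simpa [antidiagonalLine] using (Set.ext_iff.mp h (c, 0)).mp (by simp [antidiagonalLine])

lemma horizontalLine_ne_verticalLine (c d : ℝ) : horizontalLine c ≠ verticalLine d := by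
  intro h
  simpa [horizontalLine, verticalLine] using (Set.ext_iff.mp h (d + 1, c)).mp rfl

lemma horizontalLine_ne_antidiagonalLine (c d : ℝ) : horizontalLine c ≠ antidiagonalLine d := by
  intro h
  have := (Set.ext_iff.mp h (d - c + 1, c)).mp rfl
  simp only [antidiagonalLine, Set.mem_ofPred_eq] at this
  linarith

lemma verticalLine_ne_antidiagonalLine (c d : ℝ) : verticalLine c ≠ antidiagonalLine d := by
  intro h
  have := (Set.ext_iff.mp h (c, d - c + 1)).mp rfl
  simp only [antidiagonalLine, Set.mem_ofPred_eq] at this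
  linarith

noncomputable def staircaseLines (x₀ y₀ : ℕ) (D : ℤ) : Finset (Set (ℝ × ℝ)) :=
  (Finset.range y₀).image (fun i : ℕ => horizontalLine i) ∪
    (Finset.range x₀).image (fun j : ℕ => verticalLine j) ∪
    (Finset.Ioc ((x₀ + y₀ : ℕ) : ℤ) D).image (fun s : ℤ => antidiagonalLine s)

section staircaseLines

variable {x₀ y₀ : ℕ} {D : ℤ}

lemma isLine_of_mem_staircaseLines {s : Set (ℝ × ℝ)} (hs : s ∈ staircaseLines x₀ y₀ D) :
    IsLine s := by
  simp only [staircaseLines, Finset.mem_union, Finset.mem_image] at hs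
  rcases hs with (⟨i, -, rfl⟩ | ⟨j, -, rfl⟩) | ⟨k, -, rfl⟩
  · exact isLine_horizontalLine _
  · exact isLine_verticalLine _
  · exact isLine_antidiagonalLine _

lemma notMem_of_mem_staircaseLines {s : Set (ℝ × ℝ)} (hs : s ∈ staircaseLines x₀ y₀ D) :
    ((x₀ : ℝ), (y₀ : ℝ)) ∉ s := by
  simp only [staircaseLines, Finset.mem_union, Finset.mem_image, Finset.mem_range,
    Finset.mem_Ioc] at hs
  rcases hs with (⟨i, hi, rfl⟩ | ⟨j, hj, rfl⟩) | ⟨k, hk, rfl⟩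
  · simp only [horizontalLine, Set.mem_ofPred_eq, Nat.cast_inj]
    omega
  · simp only [verticalLine, Set.mem_ofPred_eq, Nat.cast_inj]
    omega
  · simp only [antidiagonalLine, Set.mem_ofPred_eq]
    exact_mod_cast (by push_cast at hk; omega : ((x₀ + y₀ : ℕ) : ℤ) ≠ k)

lemma exists_mem_staircaseLines {x y : ℕ} (hne : (x, y) ≠ (x₀, y₀))
    (hD : y₀ ≤ y → ((x + y : ℕ) : ℤ) ≤ D) :
    ∃ s ∈ staircaseLines x₀ y₀ D, ((x : ℝ), (y : ℝ)) ∈ s := by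
  simp only [staircaseLines, Finset.mem_union, Finset.mem_image, Finset.mem_range,
    Finset.mem_Ioc, or_and_right, exists_or]
  by_cases hy : y < y₀
  · exact .inl <| .inl ⟨_, ⟨y, hy, rfl⟩, rfl⟩
  by_cases hx : x < x₀
  · exact .inl <| .inr ⟨_, ⟨x, hx, rfl⟩, rfl⟩
  have hxy : x₀ + y₀ < x + y := by
    simp only [ne_eq, Prod.mk.injEq] at hne
    omega
  refine .inr ⟨_, ⟨(x + y : ℕ), ⟨by exact_mod_cast hxy, hD (by omega)⟩, rfl⟩, ?_⟩
  simp [antidiagonalLine]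

lemma card_staircaseLines (h : ((x₀ + y₀ : ℕ) : ℤ) ≤ D) :
    ((staircaseLines x₀ y₀ D).card : ℤ) = D := by
  have hdisj₁ : Disjoint ((Finset.range y₀).image (fun i : ℕ => horizontalLine i))
      ((Finset.range x₀).image (fun j : ℕ => verticalLine j)) := by
    simp only [Finset.disjoint_left, Finset.mem_image]
    rintro _ ⟨i, -, rfl⟩ ⟨j, -, h⟩
    exact horizontalLine_ne_verticalLine _ _ h.symm
  have hdisj₂ : Disjoint ((Finset.range y₀).image (fun i : ℕ => horizontalLine i) ∪
      (Finset.range x₀).image (fun j : ℕ => verticalLine j))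
      ((Finset.Ioc ((x₀ + y₀ : ℕ) : ℤ) D).image (fun s : ℤ => antidiagonalLine s)) := by
    simp only [Finset.disjoint_left, Finset.mem_union, Finset.mem_image]
    rintro _ (⟨i, -, rfl⟩ | ⟨j, -, rfl⟩) ⟨k, -, h⟩
    · exact horizontalLine_ne_antidiagonalLine _ _ h.symm
    · exact verticalLine_ne_antidiagonalLine _ _ h.symm
  have hinj₁ : Function.Injective fun i : ℕ => horizontalLine i :=
    horizontalLine_injective.comp Nat.cast_injective
  have hinj₂ : Function.Injective fun j : ℕ => verticalLine j :=
    verticalLine_injective.comp Nat.cast_injective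
  have hinj₃ : Function.Injective fun k : ℤ => antidiagonalLine k :=
    antidiagonalLine_injective.comp Int.cast_injective
  rw [staircaseLines, Finset.card_union_of_disjoint hdisj₂, Finset.card_union_of_disjoint hdisj₁,
    Finset.card_image_of_injective _ hinj₁, Finset.card_image_of_injective _ hinj₂,
    Finset.card_image_of_injective _ hinj₃, Finset.card_range, Finset.card_range, Nat.cast_add,
    Int.card_Ioc_of_le _ _ h]
  push_cast
  ring

end staircaseLines

lemma add_le_of_mem_halfRectangularGrid {m n x y y₀ : ℕ} (hm : 2 ≤ m) (hmn : m ≤ n)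
    (hxy : (m - 1) * x + (n - 1) * y ≤ (m - 1) * (n - 1)) (hy : y₀ ≤ y) :
    ((x + y : ℕ) : ℤ) ≤ n - 1 - ⌈(((n : ℝ) - m) / ((m : ℝ) - 1)) * y₀⌉ := by
  have hm' : (1 : ℝ) < m := by exact_mod_cast hm
  have hxy' : ((m : ℝ) - 1) * x + ((n : ℝ) - 1) * y ≤ ((m : ℝ) - 1) * ((n : ℝ) - 1) := by
    have := (Nat.cast_le (α := ℝ)).mpr hxy
    push_cast [Nat.cast_sub (by omega : 1 ≤ m), Nat.cast_sub (by omega : 1 ≤ n)] at this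
    exact this
  have hmono : ((n : ℝ) - m) * y₀ ≤ ((n : ℝ) - m) * y :=
    mul_le_mul_of_nonneg_left (by exact_mod_cast hy) (sub_nonneg.mpr (by exact_mod_cast hmn))
  rw [le_sub_comm, Int.ceil_le, div_mul_eq_mul_div, div_le_iff₀ (by linarith)]
  push_cast
  nlinarith

theorem stmt_7_general (m n : ℕ) (hm : 2 ≤ m) (hmn : m ≤ n)
    -- P = (x₀, y₀) is a point of the m × n half-rectangular grid
    (x₀ y₀ : ℕ)
    (hP : (m - 1) * x₀ + (n - 1) * y₀ ≤ (m - 1) * (n - 1)) :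
    -- there is a set of exactly n − ⌈((n−m)/(m−1))·y₀⌉ − 1 lines, none through P,
    -- whose union contains every point of ℋ ∖ {P}
    ∃ L : Finset (Set (ℝ × ℝ)),
      (∀ s ∈ L, IsLine s) ∧
      (∀ s ∈ L, ((x₀ : ℝ), (y₀ : ℝ)) ∉ s) ∧
      (∀ x y : ℕ, x ≤ n - 1 → y ≤ m - 1 →
        (m - 1) * x + (n - 1) * y ≤ (m - 1) * (n - 1) → (x, y) ≠ (x₀, y₀) →
        ∃ s ∈ L, ((x : ℝ), (y : ℝ)) ∈ s) ∧
      (L.card : ℤ) = (n : ℤ) - ⌈(((n : ℝ) - (m : ℝ)) / ((m : ℝ) - 1)) * (y₀ : ℝ)⌉ - 1 := by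
  refine ⟨staircaseLines x₀ y₀ (n - 1 - ⌈(((n : ℝ) - m) / ((m : ℝ) - 1)) * y₀⌉),
    fun s => isLine_of_mem_staircaseLines, fun s => notMem_of_mem_staircaseLines,
    fun x y _ _ hxy hne => ?_, ?_⟩
  · exact exists_mem_staircaseLines hne fun hy =>
      add_le_of_mem_halfRectangularGrid hm hmn hxy hy
  · rw [card_staircaseLines (add_le_of_mem_halfRectangularGrid hm hmn hP le_rfl)]
    ring

theorem stmt_7 (m n : ℕ) (hm : 2 ≤ m) (hmn : m ≤ n)
    -- P = (x₀, y₀) is a point of the m × n half-rectangular grid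
    (x₀ y₀ : ℕ) (hx₀ : x₀ ≤ n - 1) (hy₀ : y₀ ≤ m - 1)
    (hP : (m - 1) * x₀ + (n - 1) * y₀ ≤ (m - 1) * (n - 1)) :
    -- there is a set of exactly n − ⌈((n−m)/(m−1))·y₀⌉ − 1 lines, none through P,
    -- whose union contains every point of ℋ ∖ {P}
    ∃ L : Finset (Set (ℝ × ℝ)),
      (∀ s ∈ L, IsLine s) ∧
      (∀ s ∈ L, ((x₀ : ℝ), (y₀ : ℝ)) ∉ s) ∧
      (∀ x y : ℕ, x ≤ n - 1 → y ≤ m - 1 →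
        (m - 1) * x + (n - 1) * y ≤ (m - 1) * (n - 1) → (x, y) ≠ (x₀, y₀) →
        ∃ s ∈ L, ((x : ℝ), (y : ℝ)) ∈ s) ∧
      (L.card : ℤ) = (n : ℤ) - ⌈(((n : ℝ) - (m : ℝ)) / ((m : ℝ) - 1)) * (y₀ : ℝ)⌉ - 1 :=
  stmt_7_general m n hm hmn x₀ y₀ hP
end

section
/- There exists a constant C > 0 such that for every 3-dimensional half-grid Γ = {(aᵢ, bⱼ, c_l) : i + j + l ≤ n} of order n (given by real numbers 0 = a₀ < a₁ < ⋯ < a_n, 0 = b₀ < b₁ < ⋯ < b_n, 0 = c₀ < c₁ < ⋯ < c_n) and every positive integer k, there exists a finite multiset of at most (31/18)·n·k + C·(n² + k) planes in ℝ³, none of which passes through the origin, such that every point of Γ ∖ {(0,0,0)} lies on at least k of the planes, counted with multiplicity. -/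
open scoped Classical

/-- `IsOnPlane P p` means the point `p : Fin 3 → ℝ` lies on the plane with coefficients
`P = (u, d)`, i.e. on `{x | u ⬝ x = d}`. -/
def IsOnPlane (P : (Fin 3 → ℝ) × ℝ) (p : Fin 3 → ℝ) : Prop :=
  ∑ i, P.1 i * p i = P.2

namespace Stmt8Aux

noncomputable section

/-- slab weight -/
def wf (x : ℝ) : ℝ := max 0 (2/3 - x)
/-- pair-plane weight -/
def wr (x : ℝ) : ℝ := max 0 (min (x - 1/6) (min (1/2) (4/3 - x)))
/-- triangle weight -/
def wt (x : ℝ) : ℝ := max 0 (1 - wf x - 2 * wr x)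

lemma wf_nonneg (x : ℝ) : 0 ≤ wf x := le_max_left _ _
lemma wr_nonneg (x : ℝ) : 0 ≤ wr x := le_max_left _ _
lemma wt_nonneg (x : ℝ) : 0 ≤ wt x := le_max_left _ _
lemma wf_ge (x : ℝ) : 2/3 - x ≤ wf x := le_max_right _ _

lemma N1 {x y z : ℝ} (h : x + y + z ≤ 1) : 1 ≤ wf x + wf y + wf z := by
  have := wf_ge x; have := wf_ge y; have := wf_ge z; linarith

lemma half_le {x : ℝ} (h0 : 0 ≤ x) (h1 : x ≤ 5/6) : 1/2 ≤ wf x + wr x := by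
  rcases le_total x (1/6) with h | h
  · have := wf_ge x; have := wr_nonneg x; linarith
  · rcases le_total x (2/3) with h2 | h2
    · have hm : x - 1/6 ≤ min (x - 1/6) (min (1/2) (4/3 - x)) :=
        le_min le_rfl (le_min (by linarith) (by linarith))
      have hw : x - 1/6 ≤ wr x := hm.trans (le_max_right _ _)
      have := wf_ge x; linarith
    · have hm : (1:ℝ)/2 ≤ min (x - 1/6) (min (1/2) (4/3 - x)) :=
        le_min (by linarith) (le_min le_rfl (by linarith))
      have hw : (1:ℝ)/2 ≤ wr x := hm.trans (le_max_right _ _)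
      have := wf_nonneg x; linarith

lemma N2 {x y : ℝ} (hx0 : 0 ≤ x) (hx1 : x ≤ 1) (hy0 : 0 ≤ y) (hy1 : y ≤ 1)
    (hxy : x + y ≤ 1) : 1 ≤ wf x + wr x + (wf y + wr y) := by
  rcases le_total x (5/6) with h | h
  · rcases le_total y (5/6) with h' | h'
    · have := half_le hx0 h; have := half_le hy0 h'; linarith
    · have hm : 4/3 - y ≤ min (y - 1/6) (min (1/2) (4/3 - y)) :=
        le_min (by linarith) (le_min (by linarith) le_rfl)
      have hw : 4/3 - y ≤ wr y := hm.trans (le_max_right _ _)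
      have := wf_ge x; have := wf_nonneg y; have := wr_nonneg x; linarith
  · have hm : 4/3 - x ≤ min (x - 1/6) (min (1/2) (4/3 - x)) :=
      le_min (by linarith) (le_min (by linarith) le_rfl)
    have hw : 4/3 - x ≤ wr x := hm.trans (le_max_right _ _)
    have := wf_ge y; have := wf_nonneg x; have := wr_nonneg y; linarith

lemma N3 (x : ℝ) : 1 ≤ wf x + 2 * wr x + wt x := by
  have h : 1 - wf x - 2 * wr x ≤ wt x := le_max_right _ _
  linarith

lemma cost_le {x : ℝ} (h0 : 0 ≤ x) (h1 : x ≤ 1) :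
    3 * wf x + 3 * wr x + wt x ≤
      3/2 + max 0 (2/3 - x) + max 0 (1/6 - x) - max 0 (x - 5/6) := by
  rcases le_total x (1/6) with h | h
  · have hf : wf x = 2/3 - x := max_eq_right (by linarith)
    have hr : wr x = 0 :=
      max_eq_left ((min_le_left _ _).trans (by linarith))
    have ht : wt x = 1/3 + x := by
      rw [wt, hf, hr]
      rw [show (1:ℝ) - (2/3 - x) - 2*0 = 1/3 + x by ring, max_eq_right (by linarith)]
    rw [hf, hr, ht, max_eq_right (by linarith : (0:ℝ) ≤ 2/3 - x),
      max_eq_right (by linarith : (0:ℝ) ≤ 1/6 - x),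
      max_eq_left (by linarith : x - 5/6 ≤ 0)]
    linarith
  · rcases le_total x (2/3) with h2 | h2
    · have hf : wf x = 2/3 - x := max_eq_right (by linarith)
      have hmin : min (x - 1/6) (min (1/2) (4/3 - x)) = x - 1/6 :=
        min_eq_left (le_min (by linarith) (by linarith))
      have hr : wr x = x - 1/6 := by rw [wr, hmin, max_eq_right (by linarith)]
      have ht : wt x = 2/3 - x := by
        rw [wt, hf, hr]
        rw [show (1:ℝ) - (2/3 - x) - 2*(x - 1/6) = 2/3 - x by ring,
          max_eq_right (by linarith)]
      rw [hf, hr, ht, max_eq_right (by linarith : (0:ℝ) ≤ 2/3 - x),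
        max_eq_left (by linarith : (1:ℝ)/6 - x ≤ 0),
        max_eq_left (by linarith : x - 5/6 ≤ 0)]
      linarith
    · rcases le_total x (5/6) with h3 | h3
      · have hf : wf x = 0 := max_eq_left (by linarith)
        have hmin : min (x - 1/6) (min (1/2) (4/3 - x)) = 1/2 := by
          rw [min_eq_left (by linarith : (1:ℝ)/2 ≤ 4/3 - x),
            min_eq_right (by linarith)]
        have hr : wr x = 1/2 := by rw [wr, hmin, max_eq_right (by norm_num)]
        have ht : wt x = 0 := by
          rw [wt, hf, hr]
          rw [show (1:ℝ) - 0 - 2*(1/2) = 0 by ring, max_self]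
        rw [hf, hr, ht, max_eq_left (by linarith : (2:ℝ)/3 - x ≤ 0),
          max_eq_left (by linarith : (1:ℝ)/6 - x ≤ 0),
          max_eq_left (by linarith : x - 5/6 ≤ 0)]
        linarith
      · have hf : wf x = 0 := max_eq_left (by linarith)
        have hmin : min (x - 1/6) (min (1/2) (4/3 - x)) = 4/3 - x := by
          rw [min_eq_right (by linarith : (4:ℝ)/3 - x ≤ 1/2),
            min_eq_right (by linarith)]
        have hr : wr x = 4/3 - x := by rw [wr, hmin, max_eq_right (by linarith)]
        have ht : wt x = 2*x - 5/3 := by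
          rw [wt, hf, hr]
          rw [show (1:ℝ) - 0 - 2*(4/3 - x) = 2*x - 5/3 by ring,
            max_eq_right (by linarith)]
        rw [hf, hr, ht, max_eq_left (by linarith : (2:ℝ)/3 - x ≤ 0),
          max_eq_left (by linarith : (1:ℝ)/6 - x ≤ 0),
          max_eq_right (by linarith : (0:ℝ) ≤ x - 5/6)]
        linarith

lemma tele_up (u δ : ℝ) (hδ : 0 < δ) :
    max 0 u * (2*δ) ≤ (max 0 (u + δ))^2 - (max 0 u)^2 := by
  rcases le_total u 0 with h | h
  · rcases le_total (u + δ) 0 with h2 | h2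
    · rw [max_eq_left h, max_eq_left h2]; nlinarith
    · rw [max_eq_left h, max_eq_right h2]; nlinarith
  · rw [max_eq_right h, max_eq_right (by linarith)]; nlinarith

lemma tele_down (v δ : ℝ) (hδ : 0 < δ) :
    (max 0 v)^2 - (max 0 (v - δ))^2 ≤ max 0 v * (2*δ) := by
  rcases le_total v 0 with h | h
  · rw [max_eq_left h, max_eq_left (by linarith)]; nlinarith
  · rcases le_total (v - δ) 0 with h2 | h2
    · rw [max_eq_right h, max_eq_left h2]; nlinarith
    · rw [max_eq_right h, max_eq_right h2]; nlinarith

end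


noncomputable section



/-- multiplicities -/
def mf (n k i : ℕ) : ℕ := ⌈(k:ℝ) * wf ((i:ℝ)/(n:ℝ))⌉₊
def mr (n k i : ℕ) : ℕ := ⌈(k:ℝ) * wr ((i:ℝ)/(n:ℝ))⌉₊
def mt (n k i : ℕ) : ℕ := ⌈(k:ℝ) * wt ((i:ℝ)/(n:ℝ))⌉₊

def block (a b c : ℕ → ℝ) (n k i : ℕ) : Multiset ((Fin 3 → ℝ) × ℝ) :=
  Multiset.replicate (mf n k i) ((![1,0,0] : Fin 3 → ℝ), a i) +
  Multiset.replicate (mf n k i) ((![0,1,0] : Fin 3 → ℝ), b i) +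
  Multiset.replicate (mf n k i) ((![0,0,1] : Fin 3 → ℝ), c i) +
  Multiset.replicate (mr n k i) ((![(a i)⁻¹, (b i)⁻¹, 0] : Fin 3 → ℝ), 1) +
  Multiset.replicate (mr n k i) ((![(a i)⁻¹, 0, (c i)⁻¹] : Fin 3 → ℝ), 1) +
  Multiset.replicate (mr n k i) ((![0, (b i)⁻¹, (c i)⁻¹] : Fin 3 → ℝ), 1) +
  Multiset.replicate (mt n k i) ((![(a i)⁻¹, (b i)⁻¹, (c i)⁻¹] : Fin 3 → ℝ), 1)

lemma countP_replicate {α : Type*} (p : α → Prop) [DecidablePred p] (m : ℕ) (x : α) :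
    Multiset.countP p (Multiset.replicate m x) = if p x then m else 0 := by
  induction m with
  | zero => simp
  | succ m ih =>
    rw [Multiset.replicate_succ, Multiset.countP_cons, ih]
    split_ifs <;> omega

lemma countP_finsetSum {α β : Type*} (s : Finset β) (g : β → Multiset α)
    (p : α → Prop) [DecidablePred p] :
    Multiset.countP p (∑ x ∈ s, g x) = ∑ x ∈ s, Multiset.countP p (g x) := by
  induction s using Finset.cons_induction with
  | empty => simp
  | cons a t ha ih => rw [Finset.sum_cons, Finset.sum_cons, Multiset.countP_add, ih]

lemma card_finsetSum {α β : Type*} (s : Finset β) (g : β → Multiset α) :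
    Multiset.card (∑ x ∈ s, g x) = ∑ x ∈ s, Multiset.card (g x) := by
  induction s using Finset.cons_induction with
  | empty => simp
  | cons a t ha ih => rw [Finset.sum_cons, Finset.sum_cons, Multiset.card_add, ih]

lemma countP_block (a b c : ℕ → ℝ) (n k i : ℕ) (p : ((Fin 3 → ℝ) × ℝ) → Prop)
    [DecidablePred p] :
    Multiset.countP p (block a b c n k i) =
      (if p ((![1,0,0] : Fin 3 → ℝ), a i) then mf n k i else 0) +
      (if p ((![0,1,0] : Fin 3 → ℝ), b i) then mf n k i else 0) +
      (if p ((![0,0,1] : Fin 3 → ℝ), c i) then mf n k i else 0) +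
      (if p ((![(a i)⁻¹, (b i)⁻¹, 0] : Fin 3 → ℝ), 1) then mr n k i else 0) +
      (if p ((![(a i)⁻¹, 0, (c i)⁻¹] : Fin 3 → ℝ), 1) then mr n k i else 0) +
      (if p ((![0, (b i)⁻¹, (c i)⁻¹] : Fin 3 → ℝ), 1) then mr n k i else 0) +
      (if p ((![(a i)⁻¹, (b i)⁻¹, (c i)⁻¹] : Fin 3 → ℝ), 1) then mt n k i else 0) := by
  simp only [block, Multiset.countP_add, countP_replicate]

lemma card_block (a b c : ℕ → ℝ) (n k i : ℕ) :
    Multiset.card (block a b c n k i) = 3 * mf n k i + 3 * mr n k i + mt n k i := by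
  simp only [block, Multiset.card_add, Multiset.card_replicate]; ring

lemma sum_Icc_one {M : Type*} [AddCommMonoid M] (n : ℕ) (f : ℕ → M) :
    ∑ i ∈ Finset.Icc 1 n, f i = ∑ i ∈ Finset.range n, f (i+1) := by
  induction n with
  | zero => simp
  | succ n ih =>
    rw [Finset.sum_Icc_succ_top (by omega), ih, Finset.sum_range_succ]




def Dfun (n i : ℕ) : ℝ :=
  (n:ℝ)/2 * ((max 0 (2/3 - (i:ℝ)/(n:ℝ)))^2 + (max 0 (1/6 - (i:ℝ)/(n:ℝ)))^2 +
    (max 0 ((i:ℝ)/(n:ℝ) - 5/6))^2)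

lemma scale_up {n A B : ℝ} (hn : 0 < n) (h : A * (2*(1/n)) ≤ B) : A ≤ n/2 * B := by
  have h2 : A = n/2 * (A * (2*(1/n))) := by field_simp
  rw [h2]; exact mul_le_mul_of_nonneg_left h (by positivity)

lemma scale_down {n A B : ℝ} (hn : 0 < n) (h : B ≤ A * (2*(1/n))) : n/2 * B ≤ A := by
  have h2 : n/2 * (A * (2*(1/n))) = A := by field_simp
  calc n/2 * B ≤ n/2 * (A*(2*(1/n))) := mul_le_mul_of_nonneg_left h (by positivity)
    _ = A := h2

lemma sum_cost (n : ℕ) (hn : 1 ≤ n) :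
    ∑ i ∈ Finset.Icc 1 n,
        (3 * wf ((i:ℝ)/(n:ℝ)) + 3 * wr ((i:ℝ)/(n:ℝ)) + wt ((i:ℝ)/(n:ℝ)))
      ≤ 31/18 * (n:ℝ) := by
  have hn0 : (0:ℝ) < n := by exact_mod_cast hn
  rw [sum_Icc_one]
  have key : ∀ i ∈ Finset.range n,
      3 * wf (((i+1:ℕ):ℝ)/(n:ℝ)) + 3 * wr (((i+1:ℕ):ℝ)/(n:ℝ)) + wt (((i+1:ℕ):ℝ)/(n:ℝ))
        ≤ 3/2 + (Dfun n i - Dfun n (i+1)) := by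
    intro i hi
    have hi' : (i:ℝ) + 1 ≤ (n:ℝ) := by
      have := Finset.mem_range.mp hi; exact_mod_cast Nat.succ_le_of_lt this
    have hx0 : (0:ℝ) ≤ ((i:ℝ)+1)/(n:ℝ) := by positivity
    have hx1 : ((i:ℝ)+1)/(n:ℝ) ≤ 1 := by rw [div_le_one hn0]; linarith
    have hcost := cost_le hx0 hx1
    have e1 : (2/3 - ((i:ℝ)+1)/(n:ℝ)) + 1/(n:ℝ) = 2/3 - (i:ℝ)/(n:ℝ) := by
      field_simp; ring
    have t1 := tele_up (2/3 - ((i:ℝ)+1)/(n:ℝ)) (1/(n:ℝ)) (by positivity)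
    rw [e1] at t1
    have u1 : max 0 (2/3 - ((i:ℝ)+1)/(n:ℝ)) ≤
        (n:ℝ)/2 * ((max 0 (2/3 - (i:ℝ)/(n:ℝ)))^2 - (max 0 (2/3 - ((i:ℝ)+1)/(n:ℝ)))^2) :=
      scale_up hn0 t1
    have e2 : (1/6 - ((i:ℝ)+1)/(n:ℝ)) + 1/(n:ℝ) = 1/6 - (i:ℝ)/(n:ℝ) := by
      field_simp; ring
    have t2 := tele_up (1/6 - ((i:ℝ)+1)/(n:ℝ)) (1/(n:ℝ)) (by positivity)
    rw [e2] at t2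
    have u2 : max 0 (1/6 - ((i:ℝ)+1)/(n:ℝ)) ≤
        (n:ℝ)/2 * ((max 0 (1/6 - (i:ℝ)/(n:ℝ)))^2 - (max 0 (1/6 - ((i:ℝ)+1)/(n:ℝ)))^2) :=
      scale_up hn0 t2
    have e3 : (((i:ℝ)+1)/(n:ℝ) - 5/6) - 1/(n:ℝ) = (i:ℝ)/(n:ℝ) - 5/6 := by
      field_simp; ring
    have t3 := tele_down (((i:ℝ)+1)/(n:ℝ) - 5/6) (1/(n:ℝ)) (by positivity)
    rw [e3] at t3
    have u3 : (n:ℝ)/2 * ((max 0 (((i:ℝ)+1)/(n:ℝ) - 5/6))^2 -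
          (max 0 ((i:ℝ)/(n:ℝ) - 5/6))^2) ≤ max 0 (((i:ℝ)+1)/(n:ℝ) - 5/6) :=
      scale_down hn0 t3
    have hDd : Dfun n i - Dfun n (i+1) =
        (n:ℝ)/2 * ((max 0 (2/3 - (i:ℝ)/(n:ℝ)))^2 - (max 0 (2/3 - ((i:ℝ)+1)/(n:ℝ)))^2) +
        (n:ℝ)/2 * ((max 0 (1/6 - (i:ℝ)/(n:ℝ)))^2 - (max 0 (1/6 - ((i:ℝ)+1)/(n:ℝ)))^2) -
        (n:ℝ)/2 * ((max 0 (((i:ℝ)+1)/(n:ℝ) - 5/6))^2 - (max 0 ((i:ℝ)/(n:ℝ) - 5/6))^2) := by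
      simp only [Dfun]; push_cast; ring
    push_cast
    rw [hDd]
    linarith [hcost, u1, u2, u3]
  calc ∑ i ∈ Finset.range n,
        (3 * wf (((i+1:ℕ):ℝ)/(n:ℝ)) + 3 * wr (((i+1:ℕ):ℝ)/(n:ℝ)) + wt (((i+1:ℕ):ℝ)/(n:ℝ)))
      ≤ ∑ i ∈ Finset.range n, (3/2 + (Dfun n i - Dfun n (i+1))) := Finset.sum_le_sum key
    _ = (n:ℝ) * (3/2) + (Dfun n 0 - Dfun n n) := by
        rw [Finset.sum_add_distrib, Finset.sum_const, Finset.card_range,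
          Finset.sum_range_sub' (fun i => Dfun n i) n]
        simp [nsmul_eq_mul]
    _ ≤ 31/18 * (n:ℝ) := by
        have hD0 : Dfun n 0 = 17*(n:ℝ)/72 := by
          simp only [Dfun, Nat.cast_zero, zero_div]
          rw [max_eq_right (by norm_num : (0:ℝ) ≤ 2/3 - 0),
            max_eq_right (by norm_num : (0:ℝ) ≤ 1/6 - 0),
            max_eq_left (by norm_num : (0:ℝ) - 5/6 ≤ 0)]
          ring
        have hDn : Dfun n n = (n:ℝ)/72 := by
          have h1 : (n:ℝ)/(n:ℝ) = 1 := div_self (ne_of_gt hn0)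
          simp only [Dfun, h1]
          rw [max_eq_left (by norm_num : (2:ℝ)/3 - 1 ≤ 0),
            max_eq_left (by norm_num : (1:ℝ)/6 - 1 ≤ 0),
            max_eq_right (by norm_num : (0:ℝ) ≤ 1 - 5/6)]
          ring
        rw [hD0, hDn]; linarith

lemma le_mf (n k i : ℕ) : (k:ℝ) * wf ((i:ℝ)/(n:ℝ)) ≤ (mf n k i : ℝ) := Nat.le_ceil _
lemma le_mr (n k i : ℕ) : (k:ℝ) * wr ((i:ℝ)/(n:ℝ)) ≤ (mr n k i : ℝ) := Nat.le_ceil _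
lemma le_mt (n k i : ℕ) : (k:ℝ) * wt ((i:ℝ)/(n:ℝ)) ≤ (mt n k i : ℝ) := Nat.le_ceil _

lemma mf_le (n k i : ℕ) : ((mf n k i : ℕ) : ℝ) ≤ (k:ℝ) * wf ((i:ℝ)/(n:ℝ)) + 1 :=
  le_of_lt (Nat.ceil_lt_add_one (mul_nonneg (Nat.cast_nonneg k) (wf_nonneg _)))
lemma mr_le (n k i : ℕ) : ((mr n k i : ℕ) : ℝ) ≤ (k:ℝ) * wr ((i:ℝ)/(n:ℝ)) + 1 :=
  le_of_lt (Nat.ceil_lt_add_one (mul_nonneg (Nat.cast_nonneg k) (wr_nonneg _)))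
lemma mt_le (n k i : ℕ) : ((mt n k i : ℕ) : ℝ) ≤ (k:ℝ) * wt ((i:ℝ)/(n:ℝ)) + 1 :=
  le_of_lt (Nat.ceil_lt_add_one (mul_nonneg (Nat.cast_nonneg k) (wt_nonneg _)))

lemma k_le_axis (n k m : ℕ) : k ≤ mf n k m + mr n k m + mr n k m + mt n k m := by
  rw [← Nat.cast_le (α := ℝ)]
  push_cast
  have hx := mul_le_mul_of_nonneg_left (N3 ((m:ℝ)/(n:ℝ)))
    (show (0:ℝ) ≤ (k:ℝ) from Nat.cast_nonneg k)
  linarith [le_mf n k m, le_mr n k m, le_mt n k m, hx]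

lemma k_le_face (n k m1 m2 : ℕ) (h1 : 1 ≤ m1) (h2 : 1 ≤ m2) (hs : m1 + m2 ≤ n) :
    k ≤ mf n k m1 + mr n k m1 + (mf n k m2 + mr n k m2) := by
  have hn1 : 1 ≤ n := le_trans (by omega) hs
  have hn0 : (0:ℝ) < (n:ℝ) := by exact_mod_cast hn1
  have hx1 : ((m1:ℝ))/(n:ℝ) ≤ 1 := by
    rw [div_le_one hn0]; exact_mod_cast le_trans (by omega) hs
  have hy1 : ((m2:ℝ))/(n:ℝ) ≤ 1 := by
    rw [div_le_one hn0]; exact_mod_cast le_trans (by omega) hs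
  have hxy : (m1:ℝ)/(n:ℝ) + (m2:ℝ)/(n:ℝ) ≤ 1 := by
    rw [← add_div, div_le_one hn0]
    exact_mod_cast hs
  have hN := N2 (by positivity) hx1 (by positivity) hy1 hxy
  rw [← Nat.cast_le (α := ℝ)]
  push_cast
  have hx := mul_le_mul_of_nonneg_left hN (show (0:ℝ) ≤ (k:ℝ) from Nat.cast_nonneg k)
  linarith [le_mf n k m1, le_mr n k m1, le_mf n k m2, le_mr n k m2, hx]

lemma k_le_int (n k m1 m2 m3 : ℕ) (hs : m1 + m2 + m3 ≤ n) (hn : 1 ≤ n) :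
    k ≤ mf n k m1 + mf n k m2 + mf n k m3 := by
  have hn0 : (0:ℝ) < (n:ℝ) := by exact_mod_cast hn
  have hxyz : (m1:ℝ)/(n:ℝ) + (m2:ℝ)/(n:ℝ) + (m3:ℝ)/(n:ℝ) ≤ 1 := by
    rw [← add_div, ← add_div, div_le_one hn0]
    exact_mod_cast hs
  have hN := N1 hxyz
  rw [← Nat.cast_le (α := ℝ)]
  push_cast
  have hx := mul_le_mul_of_nonneg_left hN (show (0:ℝ) ≤ (k:ℝ) from Nat.cast_nonneg k)
  linarith [le_mf n k m1, le_mf n k m2, le_mf n k m3, hx]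

end
end Stmt8Aux

theorem stmt_8 :
    ∃ C : ℝ, 0 < C ∧
      ∀ n : ℕ, ∀ a b c : ℕ → ℝ,
        -- 0 = a₀ < a₁ < ⋯ < a_n, 0 = b₀ < b₁ < ⋯ < b_n, 0 = c₀ < c₁ < ⋯ < c_n
        a 0 = 0 → b 0 = 0 → c 0 = 0 →
        (∀ i j : ℕ, i < j → j ≤ n → a i < a j) →
        (∀ i j : ℕ, i < j → j ≤ n → b i < b j) →
        (∀ i j : ℕ, i < j → j ≤ n → c i < c j) →
      ∀ k : ℕ, 0 < k →
        ∃ M : Multiset ((Fin 3 → ℝ) × ℝ),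
          -- each element is a plane not passing through the origin
          (∀ P ∈ M, P.1 ≠ 0 ∧ P.2 ≠ 0) ∧
          -- at most (31/18)·n·k + C·(n² + k) planes
          (Multiset.card M : ℝ) ≤ 31 / 18 * (n : ℝ) * (k : ℝ) + C * ((n : ℝ) ^ 2 + (k : ℝ)) ∧
          -- every point of Γ ∖ {(0,0,0)} lies on at least k planes, with multiplicity
          (∀ i j l : ℕ, i + j + l ≤ n → ¬(i = 0 ∧ j = 0 ∧ l = 0) →
            k ≤ M.countP (fun P => IsOnPlane P ![a i, b j, c l])) := by
  refine ⟨7, by norm_num, ?_⟩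
  intro n a b c h0a h0b h0c ha hb hc k hk
  have hA : ∀ m, 1 ≤ m → m ≤ n → 0 < a m := by
    intro m h1 h2; have := ha 0 m h1 h2; rwa [h0a] at this
  have hB : ∀ m, 1 ≤ m → m ≤ n → 0 < b m := by
    intro m h1 h2; have := hb 0 m h1 h2; rwa [h0b] at this
  have hC : ∀ m, 1 ≤ m → m ≤ n → 0 < c m := by
    intro m h1 h2; have := hc 0 m h1 h2; rwa [h0c] at this
  refine ⟨∑ i ∈ Finset.Icc 1 n, Stmt8Aux.block a b c n k i, ?_, ?_, ?_⟩
  · -- planes avoid the origin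
    intro P hP
    obtain ⟨i0, hi0, hPi⟩ := Multiset.mem_sum.mp hP
    obtain ⟨h1i, h2i⟩ := Finset.mem_Icc.mp hi0
    have hai : a i0 ≠ 0 := ne_of_gt (hA i0 h1i h2i)
    have hbi : b i0 ≠ 0 := ne_of_gt (hB i0 h1i h2i)
    have hci : c i0 ≠ 0 := ne_of_gt (hC i0 h1i h2i)
    simp only [Stmt8Aux.block, Multiset.mem_add] at hPi
    rcases hPi with ((((((h|h)|h)|h)|h)|h)|h) <;> rw [Multiset.eq_of_mem_replicate h]
    · exact ⟨fun hv => by simpa using congrFun hv 0, hai⟩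
    · exact ⟨fun hv => by simpa using congrFun hv 1, hbi⟩
    · exact ⟨fun hv => by simpa using congrFun hv 2, hci⟩
    · exact ⟨fun hv => inv_ne_zero hai (by simpa using congrFun hv 0), one_ne_zero⟩
    · exact ⟨fun hv => inv_ne_zero hai (by simpa using congrFun hv 0), one_ne_zero⟩
    · exact ⟨fun hv => inv_ne_zero hbi (by simpa using congrFun hv 1), one_ne_zero⟩
    · exact ⟨fun hv => inv_ne_zero hai (by simpa using congrFun hv 0), one_ne_zero⟩
  · -- cardinality bound
    rcases Nat.eq_zero_or_pos n with rfl | hn1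
    · rw [show Finset.Icc 1 0 = (∅ : Finset ℕ) from rfl]
      simp
    · rw [Stmt8Aux.card_finsetSum]
      rw [Finset.sum_congr rfl (fun i _ => Stmt8Aux.card_block a b c n k i)]
      rw [Nat.cast_sum]
      have hterm : ∀ i ∈ Finset.Icc 1 n,
          ((3 * Stmt8Aux.mf n k i + 3 * Stmt8Aux.mr n k i + Stmt8Aux.mt n k i : ℕ) : ℝ)
            ≤ (k:ℝ) * (3 * Stmt8Aux.wf ((i:ℝ)/(n:ℝ)) + 3 * Stmt8Aux.wr ((i:ℝ)/(n:ℝ))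
                + Stmt8Aux.wt ((i:ℝ)/(n:ℝ))) + 7 := by
        intro i _
        push_cast
        have h1 := Stmt8Aux.mf_le n k i
        have h2 := Stmt8Aux.mr_le n k i
        have h3 := Stmt8Aux.mt_le n k i
        linarith
      calc (∑ i ∈ Finset.Icc 1 n,
              ((3 * Stmt8Aux.mf n k i + 3 * Stmt8Aux.mr n k i + Stmt8Aux.mt n k i : ℕ) : ℝ))
          ≤ ∑ i ∈ Finset.Icc 1 n,
              ((k:ℝ) * (3 * Stmt8Aux.wf ((i:ℝ)/(n:ℝ)) + 3 * Stmt8Aux.wr ((i:ℝ)/(n:ℝ))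
                + Stmt8Aux.wt ((i:ℝ)/(n:ℝ))) + 7) := Finset.sum_le_sum hterm
        _ = (k:ℝ) * (∑ i ∈ Finset.Icc 1 n,
              (3 * Stmt8Aux.wf ((i:ℝ)/(n:ℝ)) + 3 * Stmt8Aux.wr ((i:ℝ)/(n:ℝ))
                + Stmt8Aux.wt ((i:ℝ)/(n:ℝ)))) + 7 * (n:ℝ) := by
            rw [Finset.sum_add_distrib, ← Finset.mul_sum, Finset.sum_const, Nat.card_Icc]
            simp only [Nat.add_sub_cancel, nsmul_eq_mul]
            ring
        _ ≤ (k:ℝ) * (31/18 * (n:ℝ)) + 7 * (n:ℝ) := by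
            have hs := Stmt8Aux.sum_cost n hn1
            have hk0 : (0:ℝ) ≤ (k:ℝ) := Nat.cast_nonneg k
            nlinarith
        _ ≤ 31 / 18 * (n:ℝ) * (k:ℝ) + 7 * ((n:ℝ) ^ 2 + (k:ℝ)) := by
            have hn' : (1:ℝ) ≤ (n:ℝ) := by exact_mod_cast hn1
            have hk0 : (0:ℝ) ≤ (k:ℝ) := Nat.cast_nonneg k
            nlinarith
  · -- coverage
    intro i j l hsum hnz
    rw [Stmt8Aux.countP_finsetSum]
    set pd : ((Fin 3 → ℝ) × ℝ) → Prop := fun P => IsOnPlane P ![a i, b j, c l] with hpd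
    have hplane : ∀ (u0 u1 u2 d : ℝ),
        IsOnPlane ((![u0,u1,u2] : Fin 3 → ℝ), d) ![a i, b j, c l] ↔
          u0 * a i + u1 * b j + u2 * c l = d := by
      intro u0 u1 u2 d
      simp [IsOnPlane, Fin.sum_univ_three]
    by_cases hi0 : i = 0
    · by_cases hj0 : j = 0
      · by_cases hl0 : l = 0
        · exact absurd ⟨hi0, hj0, hl0⟩ hnz
        · -- axis point (0,0,l)
          subst hi0; subst hj0
          have hl1 : 1 ≤ l := Nat.one_le_iff_ne_zero.mpr hl0
          have hln : l ≤ n := by omega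
          have hal : a l ≠ 0 := ne_of_gt (hA l hl1 hln)
          have hbl : b l ≠ 0 := ne_of_gt (hB l hl1 hln)
          have hcl : c l ≠ 0 := ne_of_gt (hC l hl1 hln)
          have hφ : ∀ i' ∈ Finset.Icc 1 n,
              (if i' = l then Stmt8Aux.mf n k i' + Stmt8Aux.mr n k i' + Stmt8Aux.mr n k i' + Stmt8Aux.mt n k i' else 0)
                ≤ Multiset.countP pd (Stmt8Aux.block a b c n k i') := by
            intro i' hi'
            rw [Stmt8Aux.countP_block]
            have d1 : (if i' = l then Stmt8Aux.mf n k i' + Stmt8Aux.mr n k i' + Stmt8Aux.mr n k i' + Stmt8Aux.mt n k i' else 0) ≤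
                (if pd ((![0,0,1] : Fin 3 → ℝ), c i') then Stmt8Aux.mf n k i' else 0) +
                (if pd ((![(a i')⁻¹, 0, (c i')⁻¹] : Fin 3 → ℝ), 1) then Stmt8Aux.mr n k i' else 0) +
                (if pd ((![0, (b i')⁻¹, (c i')⁻¹] : Fin 3 → ℝ), 1) then Stmt8Aux.mr n k i' else 0) +
                (if pd ((![(a i')⁻¹, (b i')⁻¹, (c i')⁻¹] : Fin 3 → ℝ), 1) then Stmt8Aux.mt n k i' else 0) := by
              by_cases he : i' = l
              · have c0 : pd ((![0,0,1] : Fin 3 → ℝ), c i') :=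
                    (hplane 0 0 1 (c i')).mpr (by rw [he]; ring)
                have c1 : pd ((![(a i')⁻¹, 0, (c i')⁻¹] : Fin 3 → ℝ), 1) :=
                    (hplane (a i')⁻¹ 0 (c i')⁻¹ 1).mpr (by rw [he, h0a, h0b]; field_simp; ring)
                have c2 : pd ((![0, (b i')⁻¹, (c i')⁻¹] : Fin 3 → ℝ), 1) :=
                    (hplane 0 (b i')⁻¹ (c i')⁻¹ 1).mpr (by rw [he, h0a, h0b]; field_simp; ring)
                have c3 : pd ((![(a i')⁻¹, (b i')⁻¹, (c i')⁻¹] : Fin 3 → ℝ), 1) :=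
                    (hplane (a i')⁻¹ (b i')⁻¹ (c i')⁻¹ 1).mpr (by rw [he, h0a, h0b]; field_simp; ring)
                rw [if_pos he, if_pos c0, if_pos c1, if_pos c2, if_pos c3]
              · rw [if_neg he]; exact Nat.zero_le _
            omega
          have hs1 : ∑ i' ∈ Finset.Icc 1 n, (if i' = l then Stmt8Aux.mf n k i' + Stmt8Aux.mr n k i' + Stmt8Aux.mr n k i' + Stmt8Aux.mt n k i' else 0)
              = Stmt8Aux.mf n k l + Stmt8Aux.mr n k l + Stmt8Aux.mr n k l + Stmt8Aux.mt n k l := by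
            rw [Finset.sum_ite_eq' (Finset.Icc 1 n) l (fun i' => Stmt8Aux.mf n k i' + Stmt8Aux.mr n k i' + Stmt8Aux.mr n k i' + Stmt8Aux.mt n k i')]
            rw [if_pos (Finset.mem_Icc.mpr ⟨hl1, hln⟩)]
          calc k ≤ Stmt8Aux.mf n k l + Stmt8Aux.mr n k l + Stmt8Aux.mr n k l + Stmt8Aux.mt n k l := Stmt8Aux.k_le_axis n k l
            _ = ∑ i' ∈ Finset.Icc 1 n, (if i' = l then Stmt8Aux.mf n k i' + Stmt8Aux.mr n k i' + Stmt8Aux.mr n k i' + Stmt8Aux.mt n k i' else 0) := hs1.symm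
            _ ≤ ∑ i' ∈ Finset.Icc 1 n, Multiset.countP pd (Stmt8Aux.block a b c n k i') :=
                Finset.sum_le_sum hφ
      · by_cases hl0 : l = 0
        · -- axis point (0,j,0)
          subst hi0; subst hl0
          have hj1 : 1 ≤ j := Nat.one_le_iff_ne_zero.mpr hj0
          have hjn : j ≤ n := by omega
          have haj : a j ≠ 0 := ne_of_gt (hA j hj1 hjn)
          have hbj : b j ≠ 0 := ne_of_gt (hB j hj1 hjn)
          have hcj : c j ≠ 0 := ne_of_gt (hC j hj1 hjn)
          have hφ : ∀ i' ∈ Finset.Icc 1 n,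
              (if i' = j then Stmt8Aux.mf n k i' + Stmt8Aux.mr n k i' + Stmt8Aux.mr n k i' + Stmt8Aux.mt n k i' else 0)
                ≤ Multiset.countP pd (Stmt8Aux.block a b c n k i') := by
            intro i' hi'
            rw [Stmt8Aux.countP_block]
            have d1 : (if i' = j then Stmt8Aux.mf n k i' + Stmt8Aux.mr n k i' + Stmt8Aux.mr n k i' + Stmt8Aux.mt n k i' else 0) ≤
                (if pd ((![0,1,0] : Fin 3 → ℝ), b i') then Stmt8Aux.mf n k i' else 0) +
                (if pd ((![(a i')⁻¹, (b i')⁻¹, 0] : Fin 3 → ℝ), 1) then Stmt8Aux.mr n k i' else 0) +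
                (if pd ((![0, (b i')⁻¹, (c i')⁻¹] : Fin 3 → ℝ), 1) then Stmt8Aux.mr n k i' else 0) +
                (if pd ((![(a i')⁻¹, (b i')⁻¹, (c i')⁻¹] : Fin 3 → ℝ), 1) then Stmt8Aux.mt n k i' else 0) := by
              by_cases he : i' = j
              · have c0 : pd ((![0,1,0] : Fin 3 → ℝ), b i') :=
                    (hplane 0 1 0 (b i')).mpr (by rw [he]; ring)
                have c1 : pd ((![(a i')⁻¹, (b i')⁻¹, 0] : Fin 3 → ℝ), 1) :=
                    (hplane (a i')⁻¹ (b i')⁻¹ 0 1).mpr (by rw [he, h0a, h0c]; field_simp; ring)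
                have c2 : pd ((![0, (b i')⁻¹, (c i')⁻¹] : Fin 3 → ℝ), 1) :=
                    (hplane 0 (b i')⁻¹ (c i')⁻¹ 1).mpr (by rw [he, h0a, h0c]; field_simp; ring)
                have c3 : pd ((![(a i')⁻¹, (b i')⁻¹, (c i')⁻¹] : Fin 3 → ℝ), 1) :=
                    (hplane (a i')⁻¹ (b i')⁻¹ (c i')⁻¹ 1).mpr (by rw [he, h0a, h0c]; field_simp; ring)
                rw [if_pos he, if_pos c0, if_pos c1, if_pos c2, if_pos c3]
              · rw [if_neg he]; exact Nat.zero_le _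
            omega
          have hs1 : ∑ i' ∈ Finset.Icc 1 n, (if i' = j then Stmt8Aux.mf n k i' + Stmt8Aux.mr n k i' + Stmt8Aux.mr n k i' + Stmt8Aux.mt n k i' else 0)
              = Stmt8Aux.mf n k j + Stmt8Aux.mr n k j + Stmt8Aux.mr n k j + Stmt8Aux.mt n k j := by
            rw [Finset.sum_ite_eq' (Finset.Icc 1 n) j (fun i' => Stmt8Aux.mf n k i' + Stmt8Aux.mr n k i' + Stmt8Aux.mr n k i' + Stmt8Aux.mt n k i')]
            rw [if_pos (Finset.mem_Icc.mpr ⟨hj1, hjn⟩)]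
          calc k ≤ Stmt8Aux.mf n k j + Stmt8Aux.mr n k j + Stmt8Aux.mr n k j + Stmt8Aux.mt n k j := Stmt8Aux.k_le_axis n k j
            _ = ∑ i' ∈ Finset.Icc 1 n, (if i' = j then Stmt8Aux.mf n k i' + Stmt8Aux.mr n k i' + Stmt8Aux.mr n k i' + Stmt8Aux.mt n k i' else 0) := hs1.symm
            _ ≤ ∑ i' ∈ Finset.Icc 1 n, Multiset.countP pd (Stmt8Aux.block a b c n k i') :=
                Finset.sum_le_sum hφ
        · -- face point (0,j,l)
          subst hi0
          have hj1 : 1 ≤ j := Nat.one_le_iff_ne_zero.mpr hj0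
          have hl1 : 1 ≤ l := Nat.one_le_iff_ne_zero.mpr hl0
          have hjn : j ≤ n := by omega
          have hln : l ≤ n := by omega
          have haj : a j ≠ 0 := ne_of_gt (hA j hj1 hjn)
          have hbj : b j ≠ 0 := ne_of_gt (hB j hj1 hjn)
          have hcj : c j ≠ 0 := ne_of_gt (hC j hj1 hjn)
          have hal : a l ≠ 0 := ne_of_gt (hA l hl1 hln)
          have hbl : b l ≠ 0 := ne_of_gt (hB l hl1 hln)
          have hcl : c l ≠ 0 := ne_of_gt (hC l hl1 hln)
          have hφ : ∀ i' ∈ Finset.Icc 1 n,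
              (if i' = j then Stmt8Aux.mf n k i' + Stmt8Aux.mr n k i' else 0) + (if i' = l then Stmt8Aux.mf n k i' + Stmt8Aux.mr n k i' else 0)
                ≤ Multiset.countP pd (Stmt8Aux.block a b c n k i') := by
            intro i' hi'
            rw [Stmt8Aux.countP_block]
            have d1 : (if i' = j then Stmt8Aux.mf n k i' + Stmt8Aux.mr n k i' else 0) ≤
                (if pd ((![0,1,0] : Fin 3 → ℝ), b i') then Stmt8Aux.mf n k i' else 0) +
                (if pd ((![(a i')⁻¹, (b i')⁻¹, 0] : Fin 3 → ℝ), 1) then Stmt8Aux.mr n k i' else 0) := by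
              by_cases he : i' = j
              · have c0 : pd ((![0,1,0] : Fin 3 → ℝ), b i') :=
                    (hplane 0 1 0 (b i')).mpr (by rw [he]; ring)
                have c1 : pd ((![(a i')⁻¹, (b i')⁻¹, 0] : Fin 3 → ℝ), 1) :=
                    (hplane (a i')⁻¹ (b i')⁻¹ 0 1).mpr (by rw [he, h0a]; field_simp; ring)
                rw [if_pos he, if_pos c0, if_pos c1]
              · rw [if_neg he]; exact Nat.zero_le _
            have d2 : (if i' = l then Stmt8Aux.mf n k i' + Stmt8Aux.mr n k i' else 0) ≤
                (if pd ((![0,0,1] : Fin 3 → ℝ), c i') then Stmt8Aux.mf n k i' else 0) +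
                (if pd ((![(a i')⁻¹, 0, (c i')⁻¹] : Fin 3 → ℝ), 1) then Stmt8Aux.mr n k i' else 0) := by
              by_cases he : i' = l
              · have c0 : pd ((![0,0,1] : Fin 3 → ℝ), c i') :=
                    (hplane 0 0 1 (c i')).mpr (by rw [he]; ring)
                have c1 : pd ((![(a i')⁻¹, 0, (c i')⁻¹] : Fin 3 → ℝ), 1) :=
                    (hplane (a i')⁻¹ 0 (c i')⁻¹ 1).mpr (by rw [he, h0a]; field_simp; ring)
                rw [if_pos he, if_pos c0, if_pos c1]
              · rw [if_neg he]; exact Nat.zero_le _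
            omega
          have hs1 : ∑ i' ∈ Finset.Icc 1 n, (if i' = j then Stmt8Aux.mf n k i' + Stmt8Aux.mr n k i' else 0)
              = Stmt8Aux.mf n k j + Stmt8Aux.mr n k j := by
            rw [Finset.sum_ite_eq' (Finset.Icc 1 n) j (fun i' => Stmt8Aux.mf n k i' + Stmt8Aux.mr n k i')]
            rw [if_pos (Finset.mem_Icc.mpr ⟨hj1, hjn⟩)]
          have hs2 : ∑ i' ∈ Finset.Icc 1 n, (if i' = l then Stmt8Aux.mf n k i' + Stmt8Aux.mr n k i' else 0)
              = Stmt8Aux.mf n k l + Stmt8Aux.mr n k l := by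
            rw [Finset.sum_ite_eq' (Finset.Icc 1 n) l (fun i' => Stmt8Aux.mf n k i' + Stmt8Aux.mr n k i')]
            rw [if_pos (Finset.mem_Icc.mpr ⟨hl1, hln⟩)]
          calc k ≤ Stmt8Aux.mf n k j + Stmt8Aux.mr n k j + (Stmt8Aux.mf n k l + Stmt8Aux.mr n k l) := Stmt8Aux.k_le_face n k j l hj1 hl1 (by omega)
            _ = ∑ i' ∈ Finset.Icc 1 n,
                  ((if i' = j then Stmt8Aux.mf n k i' + Stmt8Aux.mr n k i' else 0) + (if i' = l then Stmt8Aux.mf n k i' + Stmt8Aux.mr n k i' else 0)) := by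
                rw [Finset.sum_add_distrib, hs1, hs2]
            _ ≤ ∑ i' ∈ Finset.Icc 1 n, Multiset.countP pd (Stmt8Aux.block a b c n k i') :=
                Finset.sum_le_sum hφ
    · by_cases hj0 : j = 0
      · by_cases hl0 : l = 0
        · -- axis point (i,0,0)
          subst hj0; subst hl0
          have hi1 : 1 ≤ i := Nat.one_le_iff_ne_zero.mpr hi0
          have hin : i ≤ n := by omega
          have hai : a i ≠ 0 := ne_of_gt (hA i hi1 hin)
          have hbi : b i ≠ 0 := ne_of_gt (hB i hi1 hin)
          have hci : c i ≠ 0 := ne_of_gt (hC i hi1 hin)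
          have hφ : ∀ i' ∈ Finset.Icc 1 n,
              (if i' = i then Stmt8Aux.mf n k i' + Stmt8Aux.mr n k i' + Stmt8Aux.mr n k i' + Stmt8Aux.mt n k i' else 0)
                ≤ Multiset.countP pd (Stmt8Aux.block a b c n k i') := by
            intro i' hi'
            rw [Stmt8Aux.countP_block]
            have d1 : (if i' = i then Stmt8Aux.mf n k i' + Stmt8Aux.mr n k i' + Stmt8Aux.mr n k i' + Stmt8Aux.mt n k i' else 0) ≤
                (if pd ((![1,0,0] : Fin 3 → ℝ), a i') then Stmt8Aux.mf n k i' else 0) +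
                (if pd ((![(a i')⁻¹, (b i')⁻¹, 0] : Fin 3 → ℝ), 1) then Stmt8Aux.mr n k i' else 0) +
                (if pd ((![(a i')⁻¹, 0, (c i')⁻¹] : Fin 3 → ℝ), 1) then Stmt8Aux.mr n k i' else 0) +
                (if pd ((![(a i')⁻¹, (b i')⁻¹, (c i')⁻¹] : Fin 3 → ℝ), 1) then Stmt8Aux.mt n k i' else 0) := by
              by_cases he : i' = i
              · have c0 : pd ((![1,0,0] : Fin 3 → ℝ), a i') :=
                    (hplane 1 0 0 (a i')).mpr (by rw [he]; ring)
                have c1 : pd ((![(a i')⁻¹, (b i')⁻¹, 0] : Fin 3 → ℝ), 1) :=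
                    (hplane (a i')⁻¹ (b i')⁻¹ 0 1).mpr (by rw [he, h0b, h0c]; field_simp; ring)
                have c2 : pd ((![(a i')⁻¹, 0, (c i')⁻¹] : Fin 3 → ℝ), 1) :=
                    (hplane (a i')⁻¹ 0 (c i')⁻¹ 1).mpr (by rw [he, h0b, h0c]; field_simp; ring)
                have c3 : pd ((![(a i')⁻¹, (b i')⁻¹, (c i')⁻¹] : Fin 3 → ℝ), 1) :=
                    (hplane (a i')⁻¹ (b i')⁻¹ (c i')⁻¹ 1).mpr (by rw [he, h0b, h0c]; field_simp; ring)
                rw [if_pos he, if_pos c0, if_pos c1, if_pos c2, if_pos c3]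
              · rw [if_neg he]; exact Nat.zero_le _
            omega
          have hs1 : ∑ i' ∈ Finset.Icc 1 n, (if i' = i then Stmt8Aux.mf n k i' + Stmt8Aux.mr n k i' + Stmt8Aux.mr n k i' + Stmt8Aux.mt n k i' else 0)
              = Stmt8Aux.mf n k i + Stmt8Aux.mr n k i + Stmt8Aux.mr n k i + Stmt8Aux.mt n k i := by
            rw [Finset.sum_ite_eq' (Finset.Icc 1 n) i (fun i' => Stmt8Aux.mf n k i' + Stmt8Aux.mr n k i' + Stmt8Aux.mr n k i' + Stmt8Aux.mt n k i')]
            rw [if_pos (Finset.mem_Icc.mpr ⟨hi1, hin⟩)]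
          calc k ≤ Stmt8Aux.mf n k i + Stmt8Aux.mr n k i + Stmt8Aux.mr n k i + Stmt8Aux.mt n k i := Stmt8Aux.k_le_axis n k i
            _ = ∑ i' ∈ Finset.Icc 1 n, (if i' = i then Stmt8Aux.mf n k i' + Stmt8Aux.mr n k i' + Stmt8Aux.mr n k i' + Stmt8Aux.mt n k i' else 0) := hs1.symm
            _ ≤ ∑ i' ∈ Finset.Icc 1 n, Multiset.countP pd (Stmt8Aux.block a b c n k i') :=
                Finset.sum_le_sum hφ
        · -- face point (i,0,l)
          subst hj0
          have hi1 : 1 ≤ i := Nat.one_le_iff_ne_zero.mpr hi0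
          have hl1 : 1 ≤ l := Nat.one_le_iff_ne_zero.mpr hl0
          have hin : i ≤ n := by omega
          have hln : l ≤ n := by omega
          have hai : a i ≠ 0 := ne_of_gt (hA i hi1 hin)
          have hbi : b i ≠ 0 := ne_of_gt (hB i hi1 hin)
          have hci : c i ≠ 0 := ne_of_gt (hC i hi1 hin)
          have hal : a l ≠ 0 := ne_of_gt (hA l hl1 hln)
          have hbl : b l ≠ 0 := ne_of_gt (hB l hl1 hln)
          have hcl : c l ≠ 0 := ne_of_gt (hC l hl1 hln)
          have hφ : ∀ i' ∈ Finset.Icc 1 n,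
              (if i' = i then Stmt8Aux.mf n k i' + Stmt8Aux.mr n k i' else 0) + (if i' = l then Stmt8Aux.mf n k i' + Stmt8Aux.mr n k i' else 0)
                ≤ Multiset.countP pd (Stmt8Aux.block a b c n k i') := by
            intro i' hi'
            rw [Stmt8Aux.countP_block]
            have d1 : (if i' = i then Stmt8Aux.mf n k i' + Stmt8Aux.mr n k i' else 0) ≤
                (if pd ((![1,0,0] : Fin 3 → ℝ), a i') then Stmt8Aux.mf n k i' else 0) +
                (if pd ((![(a i')⁻¹, (b i')⁻¹, 0] : Fin 3 → ℝ), 1) then Stmt8Aux.mr n k i' else 0) := by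
              by_cases he : i' = i
              · have c0 : pd ((![1,0,0] : Fin 3 → ℝ), a i') :=
                    (hplane 1 0 0 (a i')).mpr (by rw [he]; ring)
                have c1 : pd ((![(a i')⁻¹, (b i')⁻¹, 0] : Fin 3 → ℝ), 1) :=
                    (hplane (a i')⁻¹ (b i')⁻¹ 0 1).mpr (by rw [he, h0b]; field_simp; ring)
                rw [if_pos he, if_pos c0, if_pos c1]
              · rw [if_neg he]; exact Nat.zero_le _
            have d2 : (if i' = l then Stmt8Aux.mf n k i' + Stmt8Aux.mr n k i' else 0) ≤
                (if pd ((![0,0,1] : Fin 3 → ℝ), c i') then Stmt8Aux.mf n k i' else 0) +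
                (if pd ((![0, (b i')⁻¹, (c i')⁻¹] : Fin 3 → ℝ), 1) then Stmt8Aux.mr n k i' else 0) := by
              by_cases he : i' = l
              · have c0 : pd ((![0,0,1] : Fin 3 → ℝ), c i') :=
                    (hplane 0 0 1 (c i')).mpr (by rw [he]; ring)
                have c1 : pd ((![0, (b i')⁻¹, (c i')⁻¹] : Fin 3 → ℝ), 1) :=
                    (hplane 0 (b i')⁻¹ (c i')⁻¹ 1).mpr (by rw [he, h0b]; field_simp; ring)
                rw [if_pos he, if_pos c0, if_pos c1]
              · rw [if_neg he]; exact Nat.zero_le _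
            omega
          have hs1 : ∑ i' ∈ Finset.Icc 1 n, (if i' = i then Stmt8Aux.mf n k i' + Stmt8Aux.mr n k i' else 0)
              = Stmt8Aux.mf n k i + Stmt8Aux.mr n k i := by
            rw [Finset.sum_ite_eq' (Finset.Icc 1 n) i (fun i' => Stmt8Aux.mf n k i' + Stmt8Aux.mr n k i')]
            rw [if_pos (Finset.mem_Icc.mpr ⟨hi1, hin⟩)]
          have hs2 : ∑ i' ∈ Finset.Icc 1 n, (if i' = l then Stmt8Aux.mf n k i' + Stmt8Aux.mr n k i' else 0)
              = Stmt8Aux.mf n k l + Stmt8Aux.mr n k l := by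
            rw [Finset.sum_ite_eq' (Finset.Icc 1 n) l (fun i' => Stmt8Aux.mf n k i' + Stmt8Aux.mr n k i')]
            rw [if_pos (Finset.mem_Icc.mpr ⟨hl1, hln⟩)]
          calc k ≤ Stmt8Aux.mf n k i + Stmt8Aux.mr n k i + (Stmt8Aux.mf n k l + Stmt8Aux.mr n k l) := Stmt8Aux.k_le_face n k i l hi1 hl1 (by omega)
            _ = ∑ i' ∈ Finset.Icc 1 n,
                  ((if i' = i then Stmt8Aux.mf n k i' + Stmt8Aux.mr n k i' else 0) + (if i' = l then Stmt8Aux.mf n k i' + Stmt8Aux.mr n k i' else 0)) := by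
                rw [Finset.sum_add_distrib, hs1, hs2]
            _ ≤ ∑ i' ∈ Finset.Icc 1 n, Multiset.countP pd (Stmt8Aux.block a b c n k i') :=
                Finset.sum_le_sum hφ
      · by_cases hl0 : l = 0
        · -- face point (i,j,0)
          subst hl0
          have hi1 : 1 ≤ i := Nat.one_le_iff_ne_zero.mpr hi0
          have hj1 : 1 ≤ j := Nat.one_le_iff_ne_zero.mpr hj0
          have hin : i ≤ n := by omega
          have hjn : j ≤ n := by omega
          have hai : a i ≠ 0 := ne_of_gt (hA i hi1 hin)
          have hbi : b i ≠ 0 := ne_of_gt (hB i hi1 hin)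
          have hci : c i ≠ 0 := ne_of_gt (hC i hi1 hin)
          have haj : a j ≠ 0 := ne_of_gt (hA j hj1 hjn)
          have hbj : b j ≠ 0 := ne_of_gt (hB j hj1 hjn)
          have hcj : c j ≠ 0 := ne_of_gt (hC j hj1 hjn)
          have hφ : ∀ i' ∈ Finset.Icc 1 n,
              (if i' = i then Stmt8Aux.mf n k i' + Stmt8Aux.mr n k i' else 0) + (if i' = j then Stmt8Aux.mf n k i' + Stmt8Aux.mr n k i' else 0)
                ≤ Multiset.countP pd (Stmt8Aux.block a b c n k i') := by
            intro i' hi'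
            rw [Stmt8Aux.countP_block]
            have d1 : (if i' = i then Stmt8Aux.mf n k i' + Stmt8Aux.mr n k i' else 0) ≤
                (if pd ((![1,0,0] : Fin 3 → ℝ), a i') then Stmt8Aux.mf n k i' else 0) +
                (if pd ((![(a i')⁻¹, 0, (c i')⁻¹] : Fin 3 → ℝ), 1) then Stmt8Aux.mr n k i' else 0) := by
              by_cases he : i' = i
              · have c0 : pd ((![1,0,0] : Fin 3 → ℝ), a i') :=
                    (hplane 1 0 0 (a i')).mpr (by rw [he]; ring)
                have c1 : pd ((![(a i')⁻¹, 0, (c i')⁻¹] : Fin 3 → ℝ), 1) :=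
                    (hplane (a i')⁻¹ 0 (c i')⁻¹ 1).mpr (by rw [he, h0c]; field_simp; ring)
                rw [if_pos he, if_pos c0, if_pos c1]
              · rw [if_neg he]; exact Nat.zero_le _
            have d2 : (if i' = j then Stmt8Aux.mf n k i' + Stmt8Aux.mr n k i' else 0) ≤
                (if pd ((![0,1,0] : Fin 3 → ℝ), b i') then Stmt8Aux.mf n k i' else 0) +
                (if pd ((![0, (b i')⁻¹, (c i')⁻¹] : Fin 3 → ℝ), 1) then Stmt8Aux.mr n k i' else 0) := by
              by_cases he : i' = j
              · have c0 : pd ((![0,1,0] : Fin 3 → ℝ), b i') :=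
                    (hplane 0 1 0 (b i')).mpr (by rw [he]; ring)
                have c1 : pd ((![0, (b i')⁻¹, (c i')⁻¹] : Fin 3 → ℝ), 1) :=
                    (hplane 0 (b i')⁻¹ (c i')⁻¹ 1).mpr (by rw [he, h0c]; field_simp; ring)
                rw [if_pos he, if_pos c0, if_pos c1]
              · rw [if_neg he]; exact Nat.zero_le _
            omega
          have hs1 : ∑ i' ∈ Finset.Icc 1 n, (if i' = i then Stmt8Aux.mf n k i' + Stmt8Aux.mr n k i' else 0)
              = Stmt8Aux.mf n k i + Stmt8Aux.mr n k i := by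
            rw [Finset.sum_ite_eq' (Finset.Icc 1 n) i (fun i' => Stmt8Aux.mf n k i' + Stmt8Aux.mr n k i')]
            rw [if_pos (Finset.mem_Icc.mpr ⟨hi1, hin⟩)]
          have hs2 : ∑ i' ∈ Finset.Icc 1 n, (if i' = j then Stmt8Aux.mf n k i' + Stmt8Aux.mr n k i' else 0)
              = Stmt8Aux.mf n k j + Stmt8Aux.mr n k j := by
            rw [Finset.sum_ite_eq' (Finset.Icc 1 n) j (fun i' => Stmt8Aux.mf n k i' + Stmt8Aux.mr n k i')]
            rw [if_pos (Finset.mem_Icc.mpr ⟨hj1, hjn⟩)]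
          calc k ≤ Stmt8Aux.mf n k i + Stmt8Aux.mr n k i + (Stmt8Aux.mf n k j + Stmt8Aux.mr n k j) := Stmt8Aux.k_le_face n k i j hi1 hj1 (by omega)
            _ = ∑ i' ∈ Finset.Icc 1 n,
                  ((if i' = i then Stmt8Aux.mf n k i' + Stmt8Aux.mr n k i' else 0) + (if i' = j then Stmt8Aux.mf n k i' + Stmt8Aux.mr n k i' else 0)) := by
                rw [Finset.sum_add_distrib, hs1, hs2]
            _ ≤ ∑ i' ∈ Finset.Icc 1 n, Multiset.countP pd (Stmt8Aux.block a b c n k i') :=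
                Finset.sum_le_sum hφ
        · -- interior point
          have hi1 : 1 ≤ i := Nat.one_le_iff_ne_zero.mpr hi0
          have hj1 : 1 ≤ j := Nat.one_le_iff_ne_zero.mpr hj0
          have hl1 : 1 ≤ l := Nat.one_le_iff_ne_zero.mpr hl0
          have hin : i ≤ n := by omega
          have hjn : j ≤ n := by omega
          have hln : l ≤ n := by omega
          have hn1 : 1 ≤ n := by omega
          have hφ : ∀ i' ∈ Finset.Icc 1 n,
              (if i' = i then Stmt8Aux.mf n k i' else 0) + (if i' = j then Stmt8Aux.mf n k i' else 0)
                + (if i' = l then Stmt8Aux.mf n k i' else 0)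
                ≤ Multiset.countP pd (Stmt8Aux.block a b c n k i') := by
            intro i' hi'
            rw [Stmt8Aux.countP_block]
            have d1 : (if i' = i then Stmt8Aux.mf n k i' else 0) ≤
                (if pd ((![1,0,0] : Fin 3 → ℝ), a i') then Stmt8Aux.mf n k i' else 0) := by
              by_cases he : i' = i
              · have c0 : pd ((![1,0,0] : Fin 3 → ℝ), a i') :=
                    (hplane 1 0 0 (a i')).mpr (by rw [he]; ring)
                rw [if_pos he, if_pos c0]
              · rw [if_neg he]; exact Nat.zero_le _
            have d2 : (if i' = j then Stmt8Aux.mf n k i' else 0) ≤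
                (if pd ((![0,1,0] : Fin 3 → ℝ), b i') then Stmt8Aux.mf n k i' else 0) := by
              by_cases he : i' = j
              · have c0 : pd ((![0,1,0] : Fin 3 → ℝ), b i') :=
                    (hplane 0 1 0 (b i')).mpr (by rw [he]; ring)
                rw [if_pos he, if_pos c0]
              · rw [if_neg he]; exact Nat.zero_le _
            have d3 : (if i' = l then Stmt8Aux.mf n k i' else 0) ≤
                (if pd ((![0,0,1] : Fin 3 → ℝ), c i') then Stmt8Aux.mf n k i' else 0) := by
              by_cases he : i' = l
              · have c0 : pd ((![0,0,1] : Fin 3 → ℝ), c i') :=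
                    (hplane 0 0 1 (c i')).mpr (by rw [he]; ring)
                rw [if_pos he, if_pos c0]
              · rw [if_neg he]; exact Nat.zero_le _
            omega
          have hs1 : ∑ i' ∈ Finset.Icc 1 n, (if i' = i then Stmt8Aux.mf n k i' else 0)
              = Stmt8Aux.mf n k i := by
            rw [Finset.sum_ite_eq' (Finset.Icc 1 n) i (fun i' => Stmt8Aux.mf n k i')]
            rw [if_pos (Finset.mem_Icc.mpr ⟨hi1, hin⟩)]
          have hs2 : ∑ i' ∈ Finset.Icc 1 n, (if i' = j then Stmt8Aux.mf n k i' else 0)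
              = Stmt8Aux.mf n k j := by
            rw [Finset.sum_ite_eq' (Finset.Icc 1 n) j (fun i' => Stmt8Aux.mf n k i')]
            rw [if_pos (Finset.mem_Icc.mpr ⟨hj1, hjn⟩)]
          have hs3 : ∑ i' ∈ Finset.Icc 1 n, (if i' = l then Stmt8Aux.mf n k i' else 0)
              = Stmt8Aux.mf n k l := by
            rw [Finset.sum_ite_eq' (Finset.Icc 1 n) l (fun i' => Stmt8Aux.mf n k i')]
            rw [if_pos (Finset.mem_Icc.mpr ⟨hl1, hln⟩)]
          calc k ≤ Stmt8Aux.mf n k i + Stmt8Aux.mf n k j + Stmt8Aux.mf n k l :=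
                Stmt8Aux.k_le_int n k i j l hsum hn1
            _ = ∑ i' ∈ Finset.Icc 1 n,
                  ((if i' = i then Stmt8Aux.mf n k i' else 0) + (if i' = j then Stmt8Aux.mf n k i' else 0)
                    + (if i' = l then Stmt8Aux.mf n k i' else 0)) := by
                rw [Finset.sum_add_distrib, Finset.sum_add_distrib, hs1, hs2, hs3]
            _ ≤ ∑ i' ∈ Finset.Icc 1 n, Multiset.countP pd (Stmt8Aux.block a b c n k i') :=
                Finset.sum_le_sum hφ
end
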